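/- arXiv:1206.6765 — 3 statements merged into one kernel-verified Lean document; each statement's English description precedes it below -/
import Mathlib

section
/- Let (A^{Z^2}, F, μ) and (B^{Z^2}, G, ν) be two cellular automata endowed with invariant Borel probability measures. If there exists a bijective sliding block code φ : A^{Z^2} → B^{Z^2} (a shift-commuting homeomorphism) such that φ ∘ F = G ∘ φ and the pushforward of μ under φ equals ν, then ER_μ(S_0(A^{Z^2}), F) = ER_ν(S_0(B^{Z^2}), G). That is, the entropy rate of the partition S_0 is an invariant for continuous shift-commuting isomorphisms, for every F-invariant measure μ. -/
abbrev Config (A : Type*) : Type _ := ℤ × ℤ → A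

/-- The shift by `v`: `(shift v x) u = x (u + v)`. -/
def shift {A : Type*} (v : ℤ × ℤ) (x : Config A) : Config A := fun u => x (u + v)

/-- The square `E_n = {(i,j) : |i|,|j| ≤ n}`. -/
noncomputable def Esq (n : ℕ) : Finset (ℤ × ℤ) := Finset.Icc (-(n : ℤ), -(n : ℤ)) ((n : ℤ), (n : ℤ))

/-- The band `E'_n = E_n \ E_{n-r}` (outer band of `E_n` of width `r`). -/
noncomputable def Eband (r n : ℕ) : Finset (ℤ × ℤ) := Esq n \ Esq (n - r)

/-- `F` is a cellular automaton of radius `r`: it commutes with all shifts and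
its value at the origin only depends on the coordinates in `E_r`. -/
def IsCA {A : Type*} (F : Config A → Config A) (r : ℕ) : Prop :=
  (∀ v x, F (shift v x) = shift v (F x)) ∧
    ∀ x y : Config A, (∀ u ∈ Esq r, x u = y u) → F x (0, 0) = F y (0, 0)

/-- Shannon entropy `H_μ` of the finite partition given by the fibers of `p`. -/
noncomputable def partEnt {X : Type*} [MeasurableSpace X] (μ : MeasureTheory.Measure X)
    {ι : Type*} [Fintype ι] (p : X → ι) : ℝ :=
  ∑ i : ι, Real.negMulLog ((μ (p ⁻¹' {i})).toReal)

/-- Kolmogorov–Sinai entropy `h_μ(P,F)` of the partition `p` with respect to `F`: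
the limit of `H_μ(⋁_{i=0}^{N-1} F^{-i} P)/N`. -/
noncomputable def ksEnt {X : Type*} [MeasurableSpace X] (μ : MeasureTheory.Measure X)
    (F : X → X) {ι : Type*} [Fintype ι] (p : X → ι) : ℝ :=
  Filter.atTop.limsup fun N : ℕ =>
    partEnt μ (fun x => fun i : Fin N => p (F^[(i : ℕ)] x)) / (N : ℝ)

/-- The partition `P_n = ⋁_{v ∈ E_n} σ^v(P)`. -/
def sqJoin {A ι : Type*} (p : Config A → ι) (n : ℕ) :
    Config A → ({v : ℤ × ℤ // v ∈ Esq n} → ι) :=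
  fun x v => p (shift v.1 x)

/-- The partition `P'_n = ⋁_{v ∈ E'_n} σ^v(P)`. -/
def bandJoin {A ι : Type*} (p : Config A → ι) (r n : ℕ) :
    Config A → ({v : ℤ × ℤ // v ∈ Eband r n} → ι) :=
  fun x v => p (shift v.1 x)

/-- The clopen partition `S_0` of `A^{ℤ²}` according to the coordinate `(0,0)`. -/
def p0 {A : Type*} : Config A → A := fun x => x (0, 0)

/-- The entropy rate `ER_μ(P,F) = limsup_n h_μ(P'_n,F)/n` of a partition `p`,
for a CA of radius `r`. -/
noncomputable def ERpart {A : Type*} [MeasurableSpace A] (μ : MeasureTheory.Measure (Config A))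
    (F : Config A → Config A) {ι : Type*} [Fintype ι] (p : Config A → ι) (r : ℕ) : ℝ :=
  Filter.atTop.limsup fun n : ℕ => ksEnt μ F (bandJoin p r n) / (n : ℝ)

/-- The entropy rate `ER_μ(A^{ℤ²},F)`: the supremum of `ER_μ(P,F)` over all
finite measurable partitions `P`. -/
noncomputable def ERsys {A : Type*} [MeasurableSpace A] (μ : MeasureTheory.Measure (Config A))
    (F : Config A → Config A) (r : ℕ) : ℝ :=
  sSup {x : ℝ | ∃ (k : ℕ) (p : Config A → Fin (k + 1)),
    (∀ i, MeasurableSet (p ⁻¹' {i})) ∧ x = ERpart μ F p r}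

open Filter MeasureTheory Real
open scoped ENNReal

namespace ERaux

/-! ### Elementary real/limsup helpers -/

lemma real_le_of_forall_pos_le_add {a b : ℝ} (h : ∀ ε : ℝ, 0 < ε → a ≤ b + ε) : a ≤ b := by
  by_contra hab
  have h1 := h ((a - b) / 2) (by linarith [lt_of_not_ge hab])
  linarith [lt_of_not_ge hab]

lemma myLimsupLe (f g : ℕ → ℝ) (hcb : Filter.atTop.IsCoboundedUnder (· ≤ ·) f)
    (hbd : Filter.atTop.IsBoundedUnder (· ≤ ·) g)
    (h : ∀ ε : ℝ, 0 < ε → ∀ᶠ n in atTop, f n ≤ g n + ε) :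
    limsup f atTop ≤ limsup g atTop := by
  refine real_le_of_forall_pos_le_add fun ε hε => ?_
  have hg : ∀ᶠ n in atTop, g n < limsup g atTop + ε / 2 :=
    eventually_lt_of_limsup_lt (by linarith) hbd
  refine limsup_le_of_le hcb ?_
  filter_upwards [h (ε / 2) (by linarith), hg] with n h1 h2
  linarith

lemma div_nat_mono {x y : ℝ} (N : ℕ) (h : x ≤ y) : x / (N : ℝ) ≤ y / (N : ℝ) := by
  rcases Nat.eq_zero_or_pos N with h0 | h0
  · simp [h0]
  · exact (div_le_div_iff_of_pos_right (by exact_mod_cast h0)).mpr h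

/-! ### negMulLog inequalities -/

lemma negMulLog_le_aux {a q : ℝ} (ha : 0 ≤ a) (hq0 : 0 ≤ q) (h : a = 0 ∨ 0 < q) :
    Real.negMulLog a ≤ -(a * Real.log q) + (q - a) := by
  rcases eq_or_lt_of_le ha with h0 | hapos
  · simp only [← h0, Real.negMulLog_zero, zero_mul, neg_zero, zero_add, sub_zero]
    linarith
  · have hq : 0 < q := by
      rcases h with h' | h'
      · exact absurd h' (ne_of_gt hapos)
      · exact h'
    have hlog : Real.log (q / a) ≤ q / a - 1 := Real.log_le_sub_one_of_pos (by positivity)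
    have hsplit : Real.log (q / a) = Real.log q - Real.log a :=
      Real.log_div (ne_of_gt hq) (ne_of_gt hapos)
    have h2 : a * (Real.log q - Real.log a) ≤ a * (q / a - 1) := by
      rw [← hsplit]
      exact mul_le_mul_of_nonneg_left hlog ha
    have h3 : a * (q / a - 1) = q - a := by
      field_simp
    rw [Real.negMulLog]
    nlinarith [h2, h3]

lemma negMulLog_sum_le {κ : Type*} (s : Finset κ) (a : κ → ℝ) (ha : ∀ j ∈ s, 0 ≤ a j) :
    Real.negMulLog (∑ j ∈ s, a j) ≤ ∑ j ∈ s, Real.negMulLog (a j) := by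
  classical
  set S := ∑ j ∈ s, a j with hS
  have hS0 : 0 ≤ S := Finset.sum_nonneg ha
  have key : ∀ j ∈ s, -(a j * Real.log S) ≤ Real.negMulLog (a j) := by
    intro j hj
    rcases eq_or_lt_of_le (ha j hj) with h0 | hpos
    · simp [← h0, Real.negMulLog]
    · have hle : a j ≤ S := Finset.single_le_sum ha hj
      have : Real.log (a j) ≤ Real.log S := Real.log_le_log hpos hle
      rw [Real.negMulLog]
      nlinarith [this, (ha j hj)]
  have e1 : ∑ j ∈ s, -(a j * Real.log S) = -(S * Real.log S) := by
    simp [Finset.sum_neg_distrib, Finset.sum_mul, hS]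
  calc Real.negMulLog S = ∑ j ∈ s, -(a j * Real.log S) := by
        rw [Real.negMulLog, neg_mul, e1]
      _ ≤ ∑ j ∈ s, Real.negMulLog (a j) := Finset.sum_le_sum key

/-! ### partEnt lemmas -/

section PartEnt

variable {X : Type*} [MeasurableSpace X] {μ : Measure X}

lemma nonempty_of_prob [hμ : IsProbabilityMeasure μ] : Nonempty X := by
  by_contra h
  have hX : IsEmpty X := not_nonempty_iff.mp h
  have h1 : μ Set.univ = 1 := measure_univ
  rw [Set.univ_eq_empty_iff.mpr hX, measure_empty] at h1
  exact zero_ne_one h1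

lemma prob_toReal_le_one [IsProbabilityMeasure μ] (s : Set X) : (μ s).toReal ≤ 1 := by
  have h := prob_le_one (μ := μ) (s := s)
  have := ENNReal.toReal_mono (by simp) h
  simpa using this

lemma partEnt_nonneg [IsProbabilityMeasure μ] {ι : Type*} [Fintype ι] (p : X → ι) :
    0 ≤ partEnt μ p :=
  Finset.sum_nonneg fun i _ =>
    Real.negMulLog_nonneg ENNReal.toReal_nonneg (prob_toReal_le_one _)

lemma fiber_disjoint {ι : Type*} [Fintype ι] (p : X → ι) :
    Set.PairwiseDisjoint (↑(Finset.univ : Finset ι)) (fun i => p ⁻¹' {i}) := by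
  intro i _ j _ hij
  refine Set.disjoint_left.mpr fun x hx hx' => hij ?_
  simp only [Set.mem_preimage, Set.mem_singleton_iff] at hx hx'
  rw [← hx, ← hx']

lemma sum_fibers_eq_one [IsProbabilityMeasure μ] {ι : Type*} [Fintype ι] (p : X → ι)
    (hp : ∀ i, MeasurableSet (p ⁻¹' {i})) :
    ∑ i : ι, (μ (p ⁻¹' {i})).toReal = 1 := by
  classical
  have hu : (⋃ i ∈ (Finset.univ : Finset ι), p ⁻¹' {i}) = Set.univ := by
    ext x
    simp
  have h1 : ∑ i : ι, μ (p ⁻¹' {i}) = 1 := by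
    rw [← measure_biUnion_finset (fiber_disjoint p) (fun i _ => hp i), hu, measure_univ]
  have h2 : (∑ i : ι, μ (p ⁻¹' {i})).toReal = (1 : ℝ≥0∞).toReal := by rw [h1]
  rw [ENNReal.toReal_sum (fun i _ => measure_ne_top μ _)] at h2
  simpa using h2

lemma partEnt_le_log_card {ι : Type*} [Fintype ι] [IsProbabilityMeasure μ]
    (p : X → ι) (hp : ∀ i, MeasurableSet (p ⁻¹' {i})) :
    partEnt μ p ≤ Real.log (Fintype.card ι) := by
  classical
  have hsum := sum_fibers_eq_one (μ := μ) p hp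
  have hcard : 0 < Fintype.card ι := by
    rcases Nat.eq_zero_or_pos (Fintype.card ι) with h | h
    · haveI : IsEmpty ι := Fintype.card_eq_zero_iff.mp h
      simp at hsum
    · exact h
  set c : ℝ := (Fintype.card ι : ℝ) with hc
  have hcpos : 0 < c := by rw [hc]; exact_mod_cast hcard
  have key : ∀ i : ι, Real.negMulLog ((μ (p ⁻¹' {i})).toReal) ≤
      -((μ (p ⁻¹' {i})).toReal * Real.log c⁻¹) + (c⁻¹ - (μ (p ⁻¹' {i})).toReal) :=
    fun i => negMulLog_le_aux ENNReal.toReal_nonneg (by positivity) (Or.inr (by positivity))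
  have hsum2 : partEnt μ p ≤
      ∑ i : ι, (-((μ (p ⁻¹' {i})).toReal * Real.log c⁻¹) + (c⁻¹ - (μ (p ⁻¹' {i})).toReal)) :=
    Finset.sum_le_sum (fun i _ => key i)
  have hcinv : (Fintype.card ι : ℝ) * c⁻¹ = 1 := by rw [hc]; field_simp
  have e : ∑ i : ι, (-((μ (p ⁻¹' {i})).toReal * Real.log c⁻¹) + (c⁻¹ - (μ (p ⁻¹' {i})).toReal))
      = Real.log c := by
    rw [Finset.sum_add_distrib, Finset.sum_sub_distrib, Finset.sum_neg_distrib,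
      ← Finset.sum_mul, hsum, Finset.sum_const, Finset.card_univ, Real.log_inv,
      nsmul_eq_mul, hcinv]
    ring
  rw [e] at hsum2
  exact hsum2


lemma fiber_measure_eq_sum {ι κ : Type*} [Fintype ι] [Fintype κ] [DecidableEq ι]
    [IsProbabilityMeasure μ]
    (p' : X → κ) (g : κ → ι) (hm : ∀ j, MeasurableSet (p' ⁻¹' {j})) (i : ι) :
    ((μ ((g ∘ p') ⁻¹' {i})).toReal)
      = ∑ j ∈ Finset.univ.filter (fun j => g j = i), (μ (p' ⁻¹' {j})).toReal := by
  classical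
  have hu : ((g ∘ p') ⁻¹' {i}) = ⋃ j ∈ Finset.univ.filter (fun j => g j = i), p' ⁻¹' {j} := by
    ext x
    simp [Function.comp, eq_comm]
  have h1 : μ ((g ∘ p') ⁻¹' {i}) = ∑ j ∈ Finset.univ.filter (fun j => g j = i), μ (p' ⁻¹' {j}) := by
    rw [hu, measure_biUnion_finset ((fiber_disjoint p').subset (by simp [Finset.coe_subset]))
      (fun j _ => hm j)]
  rw [h1, ENNReal.toReal_sum (fun j _ => measure_ne_top μ _)]

lemma partEnt_comp_le {ι κ : Type*} [Fintype ι] [Fintype κ] [IsProbabilityMeasure μ]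
    (p' : X → κ) (g : κ → ι) (hm : ∀ j, MeasurableSet (p' ⁻¹' {j})) :
    partEnt μ (g ∘ p') ≤ partEnt μ p' := by
  classical
  unfold partEnt
  calc ∑ i : ι, Real.negMulLog ((μ ((g ∘ p') ⁻¹' {i})).toReal)
      ≤ ∑ i : ι, ∑ j ∈ Finset.univ.filter (fun j => g j = i),
          Real.negMulLog ((μ (p' ⁻¹' {j})).toReal) := by
        refine Finset.sum_le_sum fun i _ => ?_
        rw [fiber_measure_eq_sum p' g hm i]
        exact negMulLog_sum_le _ _ (fun j _ => ENNReal.toReal_nonneg)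
    _ = ∑ j : κ, Real.negMulLog ((μ (p' ⁻¹' {j})).toReal) := by
        exact Finset.sum_fiberwise_of_maps_to (fun j _ => Finset.mem_univ (g j)) _

lemma pair_preimage {ι κ : Type*} (p : X → ι) (p' : X → κ) (i : ι) (j : κ) :
    ((fun x => (p x, p' x)) ⁻¹' {(i, j)}) = (p ⁻¹' {i}) ∩ (p' ⁻¹' {j}) := by
  ext x
  simp [Prod.ext_iff]

lemma partEnt_pair_le {ι κ : Type*} [Fintype ι] [Fintype κ] [IsProbabilityMeasure μ]
    (p : X → ι) (p' : X → κ) (hp : ∀ i, MeasurableSet (p ⁻¹' {i}))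
    (hp' : ∀ j, MeasurableSet (p' ⁻¹' {j})) :
    partEnt μ (fun x => (p x, p' x)) ≤ partEnt μ p + partEnt μ p' := by
  classical
  set c : ι → κ → ℝ := fun i j => (μ ((p ⁻¹' {i}) ∩ (p' ⁻¹' {j}))).toReal with hcdef
  have hc0 : ∀ i j, 0 ≤ c i j := fun i j => ENNReal.toReal_nonneg
  set a : ι → ℝ := fun i => (μ (p ⁻¹' {i})).toReal with hadef
  set b : κ → ℝ := fun j => (μ (p' ⁻¹' {j})).toReal with hbdef
  have ha : ∀ i, a i = ∑ j : κ, c i j := by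
    intro i
    have hu : p ⁻¹' {i} = ⋃ j ∈ (Finset.univ : Finset κ), (p ⁻¹' {i}) ∩ (p' ⁻¹' {j}) := by
      ext x
      simp
    have hdisj : Set.PairwiseDisjoint (↑(Finset.univ : Finset κ))
        (fun j => (p ⁻¹' {i}) ∩ (p' ⁻¹' {j})) := by
      intro j1 _ j2 _ hne
      exact Set.disjoint_left.mpr fun x hx hx' => hne (by
        simp only [Set.mem_inter_iff, Set.mem_preimage, Set.mem_singleton_iff] at hx hx'
        rw [← hx.2, ← hx'.2])
    have h1 : μ (p ⁻¹' {i}) = ∑ j : κ, μ ((p ⁻¹' {i}) ∩ (p' ⁻¹' {j})) := by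
      conv_lhs => rw [hu]
      exact measure_biUnion_finset hdisj (fun j _ => (hp i).inter (hp' j))
    rw [hadef]
    simp only [h1]
    rw [ENNReal.toReal_sum (fun j _ => measure_ne_top μ _)]
  have hb : ∀ j, b j = ∑ i : ι, c i j := by
    intro j
    have hu : p' ⁻¹' {j} = ⋃ i ∈ (Finset.univ : Finset ι), (p ⁻¹' {i}) ∩ (p' ⁻¹' {j}) := by
      ext x
      simp
    have hdisj : Set.PairwiseDisjoint (↑(Finset.univ : Finset ι))
        (fun i => (p ⁻¹' {i}) ∩ (p' ⁻¹' {j})) := by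
      intro i1 _ i2 _ hne
      exact Set.disjoint_left.mpr fun x hx hx' => hne (by
        simp only [Set.mem_inter_iff, Set.mem_preimage, Set.mem_singleton_iff] at hx hx'
        rw [← hx.1, ← hx'.1])
    have h1 : μ (p' ⁻¹' {j}) = ∑ i : ι, μ ((p ⁻¹' {i}) ∩ (p' ⁻¹' {j})) := by
      conv_lhs => rw [hu]
      exact measure_biUnion_finset hdisj (fun i _ => (hp i).inter (hp' j))
    rw [hbdef]
    simp only [h1]
    rw [ENNReal.toReal_sum (fun i _ => measure_ne_top μ _)]
  have hsa : ∑ i : ι, a i = 1 := sum_fibers_eq_one (μ := μ) p hp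
  have hsb : ∑ j : κ, b j = 1 := sum_fibers_eq_one (μ := μ) p' hp'
  have hca : ∀ i j, c i j ≤ a i := by
    intro i j
    rw [ha i]
    exact Finset.single_le_sum (fun j' _ => hc0 i j') (Finset.mem_univ j)
  have hcb : ∀ i j, c i j ≤ b j := by
    intro i j
    rw [hb j]
    exact Finset.single_le_sum (fun i' _ => hc0 i' j) (Finset.mem_univ i)
  have key : ∀ i j, Real.negMulLog (c i j) ≤
      -(c i j * Real.log (a i)) + -(c i j * Real.log (b j)) + (a i * b j - c i j) := by
    intro i j
    rcases eq_or_lt_of_le (hc0 i j) with h0 | hpos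
    · rw [← h0]
      simp only [Real.negMulLog_zero, zero_mul, neg_zero, zero_add, sub_zero]
      have : 0 ≤ a i * b j := mul_nonneg (by rw [ha i]; positivity) (by rw [hb j]; positivity)
      linarith
    · have hai : 0 < a i := lt_of_lt_of_le hpos (hca i j)
      have hbj : 0 < b j := lt_of_lt_of_le hpos (hcb i j)
      have h1 := negMulLog_le_aux (hc0 i j) (le_of_lt (mul_pos hai hbj))
        (Or.inr (mul_pos hai hbj))
      have h2 : Real.log (a i * b j) = Real.log (a i) + Real.log (b j) :=
        Real.log_mul (ne_of_gt hai) (ne_of_gt hbj)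
      rw [h2] at h1
      nlinarith [h1]
  have lhs_eq : partEnt μ (fun x => (p x, p' x)) = ∑ i : ι, ∑ j : κ, Real.negMulLog (c i j) := by
    unfold partEnt
    rw [Fintype.sum_prod_type]
    exact Finset.sum_congr rfl fun i _ => Finset.sum_congr rfl fun j _ => by
      rw [pair_preimage]
  have sum_ab : ∑ i : ι, ∑ j : κ, (a i * b j) = 1 := by
    rw [← Finset.sum_mul_sum]
    rw [hsa, hsb, one_mul]
  have sum_c : ∑ i : ι, ∑ j : κ, c i j = 1 := by
    calc ∑ i : ι, ∑ j : κ, c i j = ∑ i : ι, a i := by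
          refine Finset.sum_congr rfl fun i _ => (ha i).symm
      _ = 1 := hsa
  have sum_ca : ∑ i : ι, ∑ j : κ, -(c i j * Real.log (a i)) = partEnt μ p := by
    unfold partEnt
    refine Finset.sum_congr rfl fun i _ => ?_
    have : ∑ j : κ, -(c i j * Real.log (a i)) = -((∑ j : κ, c i j) * Real.log (a i)) := by
      simp [Finset.sum_neg_distrib, Finset.sum_mul]
    rw [this, ← ha i, Real.negMulLog, hadef]
    ring
  have sum_cb : ∑ i : ι, ∑ j : κ, -(c i j * Real.log (b j)) = partEnt μ p' := by
    rw [Finset.sum_comm]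
    unfold partEnt
    refine Finset.sum_congr rfl fun j _ => ?_
    have : ∑ i : ι, -(c i j * Real.log (b j)) = -((∑ i : ι, c i j) * Real.log (b j)) := by
      simp [Finset.sum_neg_distrib, Finset.sum_mul]
    rw [this, ← hb j, Real.negMulLog, hbdef]
    ring
  have main : ∑ i : ι, ∑ j : κ, Real.negMulLog (c i j) ≤
      (∑ i : ι, ∑ j : κ, -(c i j * Real.log (a i)))
      + (∑ i : ι, ∑ j : κ, -(c i j * Real.log (b j)))
      + ((∑ i : ι, ∑ j : κ, a i * b j) - (∑ i : ι, ∑ j : κ, c i j)) := by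
    rw [← Finset.sum_sub_distrib, ← Finset.sum_add_distrib, ← Finset.sum_add_distrib]
    refine Finset.sum_le_sum fun i _ => ?_
    rw [← Finset.sum_sub_distrib, ← Finset.sum_add_distrib, ← Finset.sum_add_distrib]
    exact Finset.sum_le_sum fun j _ => key i j
  rw [lhs_eq]
  rw [sum_ca, sum_cb, sum_ab, sum_c] at main
  linarith

lemma partEnt_map {Y : Type*} [MeasurableSpace Y] {ι : Type*} [Fintype ι]
    (φ : X → Y) (hφ : Measurable φ) (p : Y → ι) (hp : ∀ i, MeasurableSet (p ⁻¹' {i})) :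
    partEnt (μ.map φ) p = partEnt μ (p ∘ φ) := by
  unfold partEnt
  refine Finset.sum_congr rfl fun i _ => ?_
  rw [Measure.map_apply hφ (hp i)]
  rfl

end PartEnt

/-! ### orbit partitions and ksEnt -/

section KS

variable {X : Type*} [MeasurableSpace X] {μ : Measure X}

/-- The orbit join partition `⋁_{i<N} F^{-i} p`. -/
def orb {X ι : Type*} (F : X → X) (p : X → ι) (N : ℕ) : X → (Fin N → ι) :=
  fun x i => p (F^[(i : ℕ)] x)

lemma ksEnt_eq {ι : Type*} [Fintype ι] (F : X → X) (p : X → ι) :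
    ksEnt μ F p = Filter.atTop.limsup fun N : ℕ => partEnt μ (orb F p N) / (N : ℝ) := rfl

lemma factor_through {X U W : Type*} [Nonempty U] (u : X → U) (w : X → W)
    (h : ∀ x y, w x = w y → u x = u y) : ∃ g : W → U, u = g ∘ w := by
  classical
  refine ⟨fun t => if h' : ∃ x, w x = t then u h'.choose else Classical.arbitrary U, ?_⟩
  funext x
  have h1 : ∃ z, w z = w x := ⟨x, rfl⟩
  simp only [Function.comp_apply, dif_pos h1]
  exact h _ _ h1.choose_spec.symm

lemma partEnt_orb_div_le {ι : Type*} [Fintype ι] [IsProbabilityMeasure μ] (F : X → X) (p : X → ι)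
    (hOrb : ∀ (N : ℕ) (f : Fin N → ι), MeasurableSet (orb F p N ⁻¹' {f})) (N : ℕ) :
    partEnt μ (orb F p N) / (N : ℝ) ≤ Real.log (Fintype.card ι) := by
  classical
  haveI : Nonempty X := nonempty_of_prob (μ := μ)
  haveI : Nonempty ι := ⟨p (Classical.arbitrary X)⟩
  have hcard : 1 ≤ Fintype.card ι := Fintype.card_pos
  have hlog0 : 0 ≤ Real.log (Fintype.card ι) := Real.log_nonneg (by exact_mod_cast hcard)
  have hN : partEnt μ (orb F p N) ≤ (N : ℝ) * Real.log (Fintype.card ι) := by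
    have h1 : partEnt μ (orb F p N) ≤ Real.log (Fintype.card (Fin N → ι)) :=
      partEnt_le_log_card (orb F p N) (hOrb N)
    rwa [Fintype.card_fun, Fintype.card_fin, Nat.cast_pow, Real.log_pow] at h1
  rcases Nat.eq_zero_or_pos N with h0 | h0
  · simp only [h0, Nat.cast_zero, div_zero]
    exact hlog0
  · rw [div_le_iff₀ (by exact_mod_cast h0)]
    linarith [hN]

lemma ksEnt_nonneg {ι : Type*} [Fintype ι] [IsProbabilityMeasure μ] (F : X → X) (p : X → ι)
    (hOrb : ∀ (N : ℕ) (f : Fin N → ι), MeasurableSet (orb F p N ⁻¹' {f})) :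
    0 ≤ ksEnt μ F p := by
  rw [ksEnt_eq]
  refine le_limsup_of_frequently_le (Filter.Frequently.of_forall fun N => ?_)
    (Filter.isBoundedUnder_of ⟨Real.log (Fintype.card ι), partEnt_orb_div_le (μ := μ) F p hOrb⟩)
  exact div_nonneg (partEnt_nonneg _) (Nat.cast_nonneg N)

lemma ksEnt_le_log_card {ι : Type*} [Fintype ι] [IsProbabilityMeasure μ] (F : X → X) (p : X → ι)
    (hOrb : ∀ (N : ℕ) (f : Fin N → ι), MeasurableSet (orb F p N ⁻¹' {f})) :
    ksEnt μ F p ≤ Real.log (Fintype.card ι) := by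
  rw [ksEnt_eq]
  refine limsup_le_of_le ?_ (Filter.Eventually.of_forall (partEnt_orb_div_le F p hOrb))
  exact Filter.IsCoboundedUnder.of_frequently_ge (a := 0)
    (Filter.Frequently.of_forall fun N => div_nonneg (partEnt_nonneg _) (Nat.cast_nonneg N))

lemma orb_comp {ι κ : Type*} (F : X → X) (p' : X → κ) (g : κ → ι) (N : ℕ) :
    orb F (g ∘ p') N = (fun w => g ∘ w) ∘ (orb F p' N) := rfl

lemma ksEnt_mono {ι κ : Type*} [Fintype ι] [Fintype κ] [IsProbabilityMeasure μ]
    (F : X → X) (p : X → ι) (p' : X → κ) (g : κ → ι) (hg : p = g ∘ p')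
    (hOrb' : ∀ (N : ℕ) (f : Fin N → κ), MeasurableSet (orb F p' N ⁻¹' {f})) :
    ksEnt μ F p ≤ ksEnt μ F p' := by
  rw [ksEnt_eq, ksEnt_eq]
  refine limsup_le_limsup (Filter.Eventually.of_forall fun N => ?_)
    (Filter.IsCoboundedUnder.of_frequently_ge (a := 0)
      (Filter.Frequently.of_forall fun N => div_nonneg (partEnt_nonneg _) (Nat.cast_nonneg N)))
    (Filter.isBoundedUnder_of ⟨Real.log (Fintype.card κ), partEnt_orb_div_le (μ := μ) F p' hOrb'⟩)
  refine div_nat_mono N ?_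
  have : orb F p N = (fun w => g ∘ w) ∘ (orb F p' N) := by rw [hg, orb_comp]
  rw [this]
  exact partEnt_comp_le (orb F p' N) (fun w => g ∘ w) (hOrb' N)

end KS

/-! ### geometry of Esq / windows / CA locality -/

section ConfigLemmas

lemma mem_Esq {v : ℤ × ℤ} {n : ℕ} :
    v ∈ Esq n ↔ -(n : ℤ) ≤ v.1 ∧ v.1 ≤ n ∧ -(n : ℤ) ≤ v.2 ∧ v.2 ≤ n := by
  simp only [Esq, Finset.mem_Icc, Prod.le_def]
  tauto

lemma Esq_mono {m n : ℕ} (h : m ≤ n) : Esq m ⊆ Esq n := by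
  intro v hv
  rw [mem_Esq] at hv ⊢
  have : (m : ℤ) ≤ n := by exact_mod_cast h
  omega

lemma zero_mem_Esq {n : ℕ} : ((0, 0) : ℤ × ℤ) ∈ Esq n := by
  rw [mem_Esq]
  simp

/-- A partition map only depends on the coordinates in `Esq m`. -/
def HasWindow {A ι : Type*} (p : Config A → ι) (m : ℕ) : Prop :=
  ∀ x y : Config A, (∀ u ∈ Esq m, x u = y u) → p x = p y

lemma shift_eval {A : Type*} (v : ℤ × ℤ) (x : Config A) :
    shift v x (0, 0) = x v := by
  have : ((0, 0) : ℤ × ℤ) + v = v := by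
    ext <;> simp
  rw [shift, this]

lemma ca_local {A : Type*} {F : Config A → Config A} {r : ℕ} (hF : IsCA F r) {M : ℕ}
    (hM : r ≤ M) {x y : Config A} (h : ∀ u ∈ Esq M, x u = y u) :
    ∀ u ∈ Esq (M - r), F x u = F y u := by
  intro u hu
  have e1 : F x u = F (shift u x) (0, 0) := by rw [hF.1, shift_eval]
  have e2 : F y u = F (shift u y) (0, 0) := by rw [hF.1, shift_eval]
  rw [e1, e2]
  refine hF.2 _ _ fun w hw => ?_
  show x (w + u) = y (w + u)
  refine h _ ?_
  rw [mem_Esq] at hw hu ⊢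
  have hcast : ((M - r : ℕ) : ℤ) = (M : ℤ) - r := by
    rw [Nat.cast_sub hM]
  rw [hcast] at hu
  have hrM : (r : ℤ) ≤ M := by exact_mod_cast hM
  simp only [Prod.fst_add, Prod.snd_add]
  omega

lemma ca_iter_local {A : Type*} {F : Config A → Config A} {r : ℕ} (hF : IsCA F r) (m : ℕ) :
    ∀ (k : ℕ) (x y : Config A), (∀ u ∈ Esq (m + k * r), x u = y u) →
      ∀ u ∈ Esq m, F^[k] x u = F^[k] y u := by
  intro k
  induction k with
  | zero => intro x y h u hu; simpa using h u (by simpa using hu)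
  | succ k ih =>
    intro x y h u hu
    have h1 : ∀ u ∈ Esq (m + k * r), F x u = F y u := by
      have := ca_local hF (M := m + k * r + r) (Nat.le_add_left r _)
        (x := x) (y := y) (fun u hu => h u (by
          rw [show m + (k + 1) * r = m + k * r + r from by ring]
          exact hu))
      simpa using this
    rw [Function.iterate_succ_apply, Function.iterate_succ_apply]
    exact ih (F x) (F y) h1 u hu

lemma hasWindow_orb {A ι : Type*} {F : Config A → Config A} {r : ℕ} (hF : IsCA F r)
    {p : Config A → ι} {m : ℕ} (hp : HasWindow p m) (N : ℕ) :
    HasWindow (ERaux.orb F p N) (m + N * r) := by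
  intro x y h
  funext i
  have hle : m + (i : ℕ) * r ≤ m + N * r :=
    Nat.add_le_add_left (Nat.mul_le_mul_right r (le_of_lt i.2)) m
  have := ca_iter_local hF m (i : ℕ) x y (fun u hu => h u (Esq_mono hle hu))
  exact hp _ _ this

lemma measurableSet_preimage_of_window {A : Type*} [Fintype A] [MeasurableSpace A]
    [DiscreteMeasurableSpace A] {ι : Type*} {p : Config A → ι} {m : ℕ}
    (hp : HasWindow p m) (i : ι) : MeasurableSet (p ⁻¹' {i}) := by
  classical
  haveI : Nonempty ι := ⟨i⟩
  set proj : Config A → ({v : ℤ × ℤ // v ∈ Esq m} → A) := fun x v => x v.1 with hproj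
  have hfac : ∀ x y, proj x = proj y → p x = p y := by
    intro x y hxy
    exact hp x y fun u hu => congrFun hxy ⟨u, hu⟩
  obtain ⟨g, hg⟩ := ERaux.factor_through p proj hfac
  have hset : p ⁻¹' {i} = proj ⁻¹' (g ⁻¹' {i}) := by rw [hg]; rfl
  rw [hset]
  have hprojm : Measurable proj := measurable_pi_lambda _ fun v => measurable_pi_apply v.1
  exact hprojm ((Set.toFinite (g ⁻¹' {i})).measurableSet)

lemma hasWindow_sqJoin {A : Type*} (m : ℕ) : HasWindow (sqJoin (p0 (A := A)) m) m := by
  intro x y h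
  funext v
  show p0 (shift v.1 x) = p0 (shift v.1 y)
  rw [p0, p0, shift_eval, shift_eval]
  exact h v.1 v.2

lemma hasWindow_of_le {A ι : Type*} {p : Config A → ι} {m m' : ℕ} (h : m ≤ m')
    (hp : HasWindow p m) : HasWindow p m' :=
  fun x y hxy => hp x y fun u hu => hxy u (Esq_mono h hu)

lemma hasWindow_bandJoin {A ι : Type*} {q : Config A → ι} {s : ℕ}
    (hq : ∀ x y : Config A, (∀ u ∈ Esq s, x u = y u) → q x = q y) (r n : ℕ) :
    HasWindow (bandJoin q r n) (n + s) := by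
  intro x y h
  funext v
  show q (shift v.1 x) = q (shift v.1 y)
  refine hq _ _ fun w hw => ?_
  show x (w + v.1) = y (w + v.1)
  have hv : v.1 ∈ Esq n := (Finset.sdiff_subset) v.2
  refine h _ ?_
  rw [mem_Esq] at hw hv ⊢
  simp only [Prod.fst_add, Prod.snd_add]
  push_cast
  omega

lemma sqJoin_factor {A ι : Type*} [Nonempty ι] {p : Config A → ι} {m m' : ℕ} (h : m ≤ m')
    (hp : HasWindow p m) : ∃ g, p = g ∘ sqJoin (p0 (A := A)) m' := by
  refine ERaux.factor_through p (sqJoin (p0 (A := A)) m') fun x y hxy => ?_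
  refine hp x y fun u hu => ?_
  have hu' : u ∈ Esq m' := Esq_mono h hu
  have := congrFun hxy ⟨u, hu'⟩
  simpa [sqJoin, p0, shift_eval] using this

/-- The determination lemma: the trajectory of the full square `Esq m` is determined by
the initial condition on `Esq m` together with the trajectory of the band. -/
lemma orbit_determined {A : Type*} {F : Config A → Config A} {rA : ℕ} (hF : IsCA F rA)
    {m : ℕ} (hm : rA ≤ m) (N : ℕ) (x y : Config A)
    (h0 : ∀ u ∈ Esq m, x u = y u)
    (hband : ∀ i : Fin N, ∀ u ∈ Eband rA m, F^[(i : ℕ)] x u = F^[(i : ℕ)] y u) :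
    ∀ k : ℕ, k < N → ∀ u ∈ Esq m, F^[k] x u = F^[k] y u := by
  intro k
  induction k with
  | zero => intro _ u hu; simpa using h0 u hu
  | succ k ih =>
    intro hk u hu
    have hk' : k < N := Nat.lt_of_succ_lt hk
    have hprev : ∀ u ∈ Esq m, F^[k] x u = F^[k] y u := ih hk'
    by_cases hcase : u ∈ Esq (m - rA)
    · rw [Function.iterate_succ_apply', Function.iterate_succ_apply']
      exact ca_local hF hm (x := F^[k] x) (y := F^[k] y) hprev u hcase
    · have hub : u ∈ Eband rA m := Finset.mem_sdiff.mpr ⟨hu, hcase⟩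
      exact hband ⟨k + 1, hk⟩ u hub

end ConfigLemmas

/-! ### Curtis–Hedlund–Lyndon window for continuous shift-commuting maps -/

section CHL

variable {A B : Type*}

lemma natAbs_le_window {s : ℕ} {I : Finset (ℤ × ℤ)}
    (hs : I.sup (fun v => v.1.natAbs ⊔ v.2.natAbs) ≤ s) :
    ∀ v ∈ I, v ∈ Esq s := by
  intro v hv
  have h1 : v.1.natAbs ⊔ v.2.natAbs ≤ s :=
    le_trans (Finset.le_sup (f := fun v => v.1.natAbs ⊔ v.2.natAbs) hv) hs
  rw [mem_Esq]
  have h2 : v.1.natAbs ≤ s := le_trans le_sup_left h1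
  have h3 : v.2.natAbs ≤ s := le_trans le_sup_right h1
  omega

lemma exists_window_of_continuous [Fintype A] [TopologicalSpace A] [DiscreteTopology A]
    [TopologicalSpace B] [DiscreteTopology B]
    (f : Config A → B) (hf : Continuous f) :
    ∃ s : ℕ, ∀ x y : Config A, (∀ u ∈ Esq s, x u = y u) → f x = f y := by
  classical
  -- for each x, an open finite-window neighbourhood on which f is constant
  have key : ∀ x : Config A, ∃ I : Finset (ℤ × ℤ),
      ∀ y : Config A, (∀ u ∈ I, y u = x u) → f y = f x := by
    intro x
    have hop : IsOpen (f ⁻¹' {f x}) := (isOpen_discrete _).preimage hf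
    rw [isOpen_pi_iff] at hop
    obtain ⟨I, u, hIu, hsub⟩ := hop x rfl
    refine ⟨I, fun y hy => ?_⟩
    have : y ∈ (I : Set (ℤ × ℤ)).pi u := by
      intro a ha
      rw [hy a ha]
      exact (hIu a ha).2
    exact hsub this
  choose I hI using key
  -- the covering by the corresponding cylinders has a finite subcover
  have hcov : (Set.univ : Set (Config A)) ⊆
      ⋃ x : Config A, {y : Config A | ∀ u ∈ I x, y u = x u} := by
    intro x _
    exact Set.mem_iUnion.mpr ⟨x, fun u _ => rfl⟩
  have hopen : ∀ x : Config A, IsOpen {y : Config A | ∀ u ∈ I x, y u = x u} := by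
    intro x
    have : {y : Config A | ∀ u ∈ I x, y u = x u} = ((I x : Set (ℤ × ℤ))).pi
        (fun u => {x u}) := by
      ext y
      simp [Set.mem_pi]
    rw [this]
    exact isOpen_set_pi (Finset.finite_toSet _) fun a _ => isOpen_discrete _
  obtain ⟨t, ht⟩ := isCompact_univ.elim_finite_subcover _ hopen hcov
  refine ⟨t.sup (fun z => (I z).sup (fun v => v.1.natAbs ⊔ v.2.natAbs)), fun x y hxy => ?_⟩
  obtain ⟨z, hz, hxz⟩ : ∃ z ∈ t, ∀ u ∈ I z, x u = z u := by
    have := ht (Set.mem_univ x)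
    simp only [Set.mem_iUnion, Set.mem_setOf_eq] at this
    obtain ⟨z, hz, h⟩ := this
    exact ⟨z, hz, h⟩
  have hwin : ∀ u ∈ I z, u ∈ Esq (t.sup (fun z => (I z).sup (fun v => v.1.natAbs ⊔ v.2.natAbs))) :=
    natAbs_le_window (Finset.le_sup (f := fun z => (I z).sup (fun v => v.1.natAbs ⊔ v.2.natAbs)) hz)
  have hyz : ∀ u ∈ I z, y u = z u := by
    intro u hu
    rw [← hxy u (hwin u hu)]
    exact hxz u hu
  rw [hI z x hxz, hI z y hyz]

end CHL

section Meas

variable {A B : Type*} [Fintype A] [MeasurableSpace A] [DiscreteMeasurableSpace A]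
  [MeasurableSpace B]

lemma measurable_of_windows [Countable B]
    (φ : Config A → Config B) (s : ℕ)
    (hs : ∀ x y : Config A, (∀ u ∈ Esq s, x u = y u) → φ x (0, 0) = φ y (0, 0))
    (hφshift : ∀ (v : ℤ × ℤ) (x : Config A), φ (shift v x) = shift v (φ x)) :
    Measurable φ := by
  refine measurable_pi_lambda _ fun u => ?_
  have hwin : HasWindow (fun x => φ x u) (s + (u.1.natAbs ⊔ u.2.natAbs)) := by
    intro x y hxy
    show φ x u = φ y u
    have h1 : φ x u = φ (shift u x) (0, 0) := by rw [hφshift, shift_eval]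
    have h2 : φ y u = φ (shift u y) (0, 0) := by rw [hφshift, shift_eval]
    rw [h1, h2]
    refine hs _ _ fun w hw => ?_
    show x (w + u) = y (w + u)
    refine hxy _ ?_
    rw [mem_Esq] at hw ⊢
    simp only [Prod.fst_add, Prod.snd_add]
    omega
  intro S _
  have : (fun x => φ x u) ⁻¹' S = ⋃ b ∈ S, (fun x => φ x u) ⁻¹' {b} := by
    ext x
    simp
  rw [this]
  exact MeasurableSet.biUnion S.to_countable
    (fun b _ => measurableSet_preimage_of_window hwin b)

end Meas

/-! ### cardinality estimates -/

section Card

lemma card_Esq (n : ℕ) : (Esq n).card = (2 * n + 1) ^ 2 := by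
  rw [Esq, Finset.Icc_prod_def, Finset.card_product]
  simp only [Int.card_Icc]
  have : ((n : ℤ) + 1 - -(n : ℤ)).toNat = 2 * n + 1 := by omega
  rw [this]
  ring

lemma card_Eband_le (r n : ℕ) : (Eband r n).card ≤ 8 * r * n + (2 * r + 1) ^ 2 := by
  rw [Eband, Finset.card_sdiff_of_subset (Esq_mono (Nat.sub_le n r)), card_Esq, card_Esq]
  rcases le_or_gt r n with h | h
  · obtain ⟨k, rfl⟩ : ∃ k, n = k + r := ⟨n - r, (Nat.sub_add_cancel h).symm⟩
    have hk : k + r - r = k := by omega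
    rw [hk]
    have e1 : (2 * (k + r) + 1) ^ 2 = (2 * k + 1) ^ 2 + (8 * r * k + 4 * r ^ 2 + 4 * r) := by
      ring
    rw [e1, Nat.add_sub_cancel_left]
    nlinarith [sq_nonneg r]
  · have h1 : (2 * n + 1) ^ 2 ≤ (2 * r + 1) ^ 2 := by nlinarith
    have h2 : (2 * n + 1) ^ 2 - (2 * (n - r) + 1) ^ 2 ≤ (2 * n + 1) ^ 2 := Nat.sub_le _ _
    omega

end Card

/-! ### Step 3: the square's KS entropy is bounded by the band's -/

section Key

variable {A : Type*} [Fintype A] [MeasurableSpace A] [DiscreteMeasurableSpace A]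
  {μ : Measure (Config A)} [IsProbabilityMeasure μ]
  {F : Config A → Config A} {rA : ℕ}

lemma ksEnt_sq_le_band (hF : IsCA F rA) {m : ℕ} (hm : rA ≤ m) :
    ksEnt μ F (sqJoin (p0 (A := A)) m) ≤ ksEnt μ F (bandJoin (p0 (A := A)) rA m) := by
  classical
  haveI : Nonempty (Config A) := nonempty_of_prob (μ := μ)
  haveI : Nonempty A := ⟨Classical.arbitrary (Config A) (0, 0)⟩
  have wSQ : HasWindow (sqJoin (p0 (A := A)) m) m := hasWindow_sqJoin m
  have wBD : HasWindow (bandJoin (p0 (A := A)) rA m) m := by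
    have := hasWindow_bandJoin (A := A) (q := p0) (s := 0)
      (fun x y h => h _ zero_mem_Esq) rA m
    simpa using this
  have hSQmeas : ∀ f, MeasurableSet (sqJoin (p0 (A := A)) m ⁻¹' {f}) := fun f =>
    measurableSet_preimage_of_window wSQ f
  have hOrbSQ : ∀ (N : ℕ) (f : Fin N → _), MeasurableSet (orb F (sqJoin (p0 (A := A)) m) N ⁻¹' {f}) :=
    fun N f => measurableSet_preimage_of_window (hasWindow_orb hF wSQ N) f
  have hOrbBD : ∀ (N : ℕ) (f : Fin N → _),
      MeasurableSet (orb F (bandJoin (p0 (A := A)) rA m) N ⁻¹' {f}) :=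
    fun N f => measurableSet_preimage_of_window (hasWindow_orb hF wBD N) f
  set C := Real.log (Fintype.card ({v : ℤ × ℤ // v ∈ Esq m} → A)) with hC
  have hkey : ∀ N : ℕ, partEnt μ (orb F (sqJoin (p0 (A := A)) m) N) ≤
      C + partEnt μ (orb F (bandJoin (p0 (A := A)) rA m) N) := by
    intro N
    set pair : Config A →
        (({v : ℤ × ℤ // v ∈ Esq m} → A) × (Fin N → ({v : ℤ × ℤ // v ∈ Eband rA m} → A))) :=
      fun x => (sqJoin (p0 (A := A)) m x, orb F (bandJoin (p0 (A := A)) rA m) N x) with hpair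
    have hdet : ∀ x y, pair x = pair y →
        orb F (sqJoin (p0 (A := A)) m) N x = orb F (sqJoin (p0 (A := A)) m) N y := by
      intro x y hxy
      have h1 : sqJoin (p0 (A := A)) m x = sqJoin (p0 (A := A)) m y := congrArg Prod.fst hxy
      have h2 : orb F (bandJoin (p0 (A := A)) rA m) N x
          = orb F (bandJoin (p0 (A := A)) rA m) N y := congrArg Prod.snd hxy
      have h0 : ∀ u ∈ Esq m, x u = y u := by
        intro u hu
        have := congrFun h1 ⟨u, hu⟩
        simpa [sqJoin, p0, shift_eval] using this
      have hband : ∀ i : Fin N, ∀ u ∈ Eband rA m, F^[(i : ℕ)] x u = F^[(i : ℕ)] y u := by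
        intro i u hu
        have := congrFun (congrFun h2 i) ⟨u, hu⟩
        simpa [orb, bandJoin, p0, shift_eval] using this
      funext i v
      show p0 (shift v.1 (F^[(i : ℕ)] x)) = p0 (shift v.1 (F^[(i : ℕ)] y))
      rw [p0, p0, shift_eval, shift_eval]
      exact orbit_determined hF hm N x y h0 hband (i : ℕ) i.2 v.1 v.2
    obtain ⟨g, hg⟩ := factor_through _ pair hdet
    have hMeasPair : ∀ w, MeasurableSet (pair ⁻¹' {w}) := by
      rintro ⟨a, b⟩
      rw [hpair, pair_preimage]
      exact (hSQmeas a).inter (hOrbBD N b)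
    calc partEnt μ (orb F (sqJoin (p0 (A := A)) m) N) = partEnt μ (g ∘ pair) := by rw [← hg]
      _ ≤ partEnt μ pair := partEnt_comp_le pair g hMeasPair
      _ ≤ partEnt μ (sqJoin (p0 (A := A)) m)
          + partEnt μ (orb F (bandJoin (p0 (A := A)) rA m) N) :=
        partEnt_pair_le _ _ hSQmeas (hOrbBD N)
      _ ≤ C + partEnt μ (orb F (bandJoin (p0 (A := A)) rA m) N) :=
        add_le_add (partEnt_le_log_card _ hSQmeas) le_rfl
  rw [ksEnt_eq, ksEnt_eq]
  refine myLimsupLe _ _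
    (Filter.IsCoboundedUnder.of_frequently_ge (a := 0)
      (Filter.Frequently.of_forall fun N => div_nonneg (partEnt_nonneg _) (Nat.cast_nonneg N)))
    (Filter.isBoundedUnder_of
      ⟨Real.log (Fintype.card ({v : ℤ × ℤ // v ∈ Eband rA m} → A)),
       partEnt_orb_div_le (μ := μ) F _ hOrbBD⟩) ?_
  intro ε hε
  have h0 : Filter.Tendsto (fun N : ℕ => C / (N : ℝ)) atTop (nhds 0) :=
    tendsto_const_div_atTop_nhds_zero_nat C
  filter_upwards [h0.eventually_lt_const hε] with N hN
  have hdiv : partEnt μ (orb F (sqJoin (p0 (A := A)) m) N) / (N : ℝ) ≤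
      C / (N : ℝ) + partEnt μ (orb F (bandJoin (p0 (A := A)) rA m) N) / (N : ℝ) := by
    have := div_nat_mono N (hkey N)
    rwa [add_div] at this
  linarith

lemma ksEnt_band_le_linear (hF : IsCA F rA) (m : ℕ) :
    ksEnt μ F (bandJoin (p0 (A := A)) rA m) ≤
      ((8 * rA * m + (2 * rA + 1) ^ 2 : ℕ) : ℝ) * Real.log (Fintype.card A) := by
  classical
  haveI : Nonempty (Config A) := nonempty_of_prob (μ := μ)
  haveI : Nonempty A := ⟨Classical.arbitrary (Config A) (0, 0)⟩
  have wBD : HasWindow (bandJoin (p0 (A := A)) rA m) m := by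
    have := hasWindow_bandJoin (A := A) (q := p0) (s := 0)
      (fun x y h => h _ zero_mem_Esq) rA m
    simpa using this
  have hOrbBD : ∀ (N : ℕ) (f : Fin N → _),
      MeasurableSet (orb F (bandJoin (p0 (A := A)) rA m) N ⁻¹' {f}) :=
    fun N f => measurableSet_preimage_of_window (hasWindow_orb hF wBD N) f
  have h1 : ksEnt μ F (bandJoin (p0 (A := A)) rA m) ≤
      Real.log (Fintype.card ({v : ℤ × ℤ // v ∈ Eband rA m} → A)) :=
    ksEnt_le_log_card F _ hOrbBD
  have h2 : Real.log (Fintype.card ({v : ℤ × ℤ // v ∈ Eband rA m} → A))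
      = ((Eband rA m).card : ℝ) * Real.log (Fintype.card A) := by
    rw [Fintype.card_fun, Fintype.card_coe, Nat.cast_pow, Real.log_pow]
  have hL : 0 ≤ Real.log (Fintype.card A) :=
    Real.log_nonneg (by exact_mod_cast Fintype.card_pos)
  have h3 : ((Eband rA m).card : ℝ) ≤ ((8 * rA * m + (2 * rA + 1) ^ 2 : ℕ) : ℝ) := by
    exact_mod_cast card_Eband_le rA m
  calc ksEnt μ F (bandJoin (p0 (A := A)) rA m)
      ≤ ((Eband rA m).card : ℝ) * Real.log (Fintype.card A) := by rw [← h2]; exact h1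
    _ ≤ _ := mul_le_mul_of_nonneg_right h3 hL

end Key

/-! ### The one-sided comparison -/

section OneSide

theorem ER_le
    {A B : Type*} [Fintype A] [MeasurableSpace A] [TopologicalSpace A] [DiscreteTopology A]
    [DiscreteMeasurableSpace A]
    [Fintype B] [MeasurableSpace B] [TopologicalSpace B] [DiscreteTopology B]
    [DiscreteMeasurableSpace B]
    (F : Config A → Config A) (rA : ℕ) (hF : IsCA F rA)
    (G : Config B → Config B) (rB : ℕ) (hG : IsCA G rB)
    (μ : MeasureTheory.Measure (Config A)) [MeasureTheory.IsProbabilityMeasure μ]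
    (ν : MeasureTheory.Measure (Config B)) [MeasureTheory.IsProbabilityMeasure ν]
    (φ : Config A → Config B) (hφcont : Continuous φ)
    (hφshift : ∀ (v : ℤ × ℤ) (x : Config A), φ (shift v x) = shift v (φ x))
    (hφF : ∀ x : Config A, φ (F x) = G (φ x))
    (hφμ : μ.map φ = ν) :
    ERpart ν G (p0 (A := B)) rB ≤ ERpart μ F (p0 (A := A)) rA := by
  classical
  haveI : Nonempty (Config A) := nonempty_of_prob (μ := μ)
  haveI : Nonempty A := ⟨Classical.arbitrary (Config A) (0, 0)⟩
  haveI : Nonempty (Config B) := nonempty_of_prob (μ := ν)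
  haveI : Nonempty B := ⟨Classical.arbitrary (Config B) (0, 0)⟩
  -- CHL window for φ
  obtain ⟨s, hs⟩ := exists_window_of_continuous (fun x => φ x (0, 0))
    ((continuous_apply ((0, 0) : ℤ × ℤ)).comp hφcont)
  have hφmeas : Measurable φ := measurable_of_windows φ s hs hφshift
  have hconj : ∀ (k : ℕ) (z : Config A), G^[k] (φ z) = φ (F^[k] z) := by
    intro k
    induction k with
    | zero => intro z; rfl
    | succ k ih =>
      intro z
      rw [Function.iterate_succ_apply', Function.iterate_succ_apply', ih, hφF]
  set S := s + rA with hSdef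
  -- the per-n comparison
  have key : ∀ n : ℕ, ksEnt ν G (bandJoin (p0 (A := B)) rB n) ≤
      ksEnt μ F (bandJoin (p0 (A := A)) rA (n + S)) := by
    intro n
    set q : Config A → B := fun z => φ z (0, 0) with hq
    set qBD := bandJoin q rB n with hqBD
    -- windows and measurability on the B side
    have wBDB : HasWindow (bandJoin (p0 (A := B)) rB n) n := by
      have := hasWindow_bandJoin (A := B) (q := p0) (s := 0)
        (fun x y h => h _ zero_mem_Esq) rB n
      simpa using this
    have hOrbB : ∀ (N : ℕ) (f : Fin N → _),
        MeasurableSet (orb G (bandJoin (p0 (A := B)) rB n) N ⁻¹' {f}) :=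
      fun N f => measurableSet_preimage_of_window (hasWindow_orb hG wBDB N) f
    -- Step 1: transfer to the A side
    have step1 : ksEnt ν G (bandJoin (p0 (A := B)) rB n) = ksEnt μ F qBD := by
      rw [ksEnt_eq, ksEnt_eq]
      congr 1
      funext N
      congr 1
      have e1 : partEnt ν (orb G (bandJoin (p0 (A := B)) rB n) N)
          = partEnt μ ((orb G (bandJoin (p0 (A := B)) rB n) N) ∘ φ) := by
        rw [← hφμ]
        exact partEnt_map φ hφmeas _ (hOrbB N)
      have e2 : (orb G (bandJoin (p0 (A := B)) rB n) N) ∘ φ = orb F qBD N := by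
        funext x
        funext i
        show bandJoin (p0 (A := B)) rB n (G^[(i : ℕ)] (φ x)) = bandJoin q rB n (F^[(i : ℕ)] x)
        rw [hconj]
        funext v
        show p0 (shift v.1 (φ (F^[(i : ℕ)] x))) = q (shift v.1 (F^[(i : ℕ)] x))
        rw [← hφshift]
        rfl
      rw [e1, e2]
    -- Step 2: compare with the full square
    have wqBD : HasWindow qBD (n + S) := by
      refine hasWindow_of_le (by omega) (hasWindow_bandJoin (q := q) (s := s) ?_ rB n)
      exact hs
    have hOrbSq : ∀ (N : ℕ) (f : Fin N → _),
        MeasurableSet (orb F (sqJoin (p0 (A := A)) (n + S)) N ⁻¹' {f}) :=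
      fun N f => measurableSet_preimage_of_window
        (hasWindow_orb hF (hasWindow_sqJoin (n + S)) N) f
    obtain ⟨g, hg⟩ := sqJoin_factor (le_refl (n + S)) wqBD
    have step2 : ksEnt μ F qBD ≤ ksEnt μ F (sqJoin (p0 (A := A)) (n + S)) :=
      ksEnt_mono F qBD _ g hg hOrbSq
    -- Step 3
    have step3 : ksEnt μ F (sqJoin (p0 (A := A)) (n + S)) ≤
        ksEnt μ F (bandJoin (p0 (A := A)) rA (n + S)) :=
      ksEnt_sq_le_band hF (by omega)
    rw [step1]
    exact le_trans step2 step3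
  -- measurability of band orbits, nonnegativity
  have hOrbBD : ∀ (m : ℕ) (N : ℕ) (f : Fin N → _),
      MeasurableSet (orb F (bandJoin (p0 (A := A)) rA m) N ⁻¹' {f}) := by
    intro m N f
    have wBD : HasWindow (bandJoin (p0 (A := A)) rA m) m := by
      have := hasWindow_bandJoin (A := A) (q := p0) (s := 0)
        (fun x y h => h _ zero_mem_Esq) rA m
      simpa using this
    exact measurableSet_preimage_of_window (hasWindow_orb hF wBD N) f
  have hOrbBDB : ∀ n (N : ℕ) (f : Fin N → _),
      MeasurableSet (orb G (bandJoin (p0 (A := B)) rB n) N ⁻¹' {f}) := by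
    intro n N f
    have wBDB : HasWindow (bandJoin (p0 (A := B)) rB n) n := by
      have := hasWindow_bandJoin (A := B) (q := p0) (s := 0)
        (fun x y h => h _ zero_mem_Esq) rB n
      simpa using this
    exact measurableSet_preimage_of_window (hasWindow_orb hG wBDB N) f
  set L := Real.log (Fintype.card A) with hL
  have hL0 : 0 ≤ L := Real.log_nonneg (by exact_mod_cast Fintype.card_pos)
  set K : ℝ := ((8 * rA + (2 * rA + 1) ^ 2 : ℕ) : ℝ) * L with hK
  have hK0 : 0 ≤ K := mul_nonneg (Nat.cast_nonneg _) hL0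
  set w : ℕ → ℝ := fun m => ksEnt μ F (bandJoin (p0 (A := A)) rA m) / (m : ℝ) with hw
  have hks_nonneg : ∀ m, 0 ≤ ksEnt μ F (bandJoin (p0 (A := A)) rA m) :=
    fun m => ksEnt_nonneg F _ (hOrbBD m)
  have hks_lin : ∀ m : ℕ, ksEnt μ F (bandJoin (p0 (A := A)) rA m) ≤
      ((8 * rA * m + (2 * rA + 1) ^ 2 : ℕ) : ℝ) * L := fun m => ksEnt_band_le_linear hF m
  have hwK : ∀ m : ℕ, w m ≤ K := by
    intro m
    rcases Nat.eq_zero_or_pos m with h0 | h0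
    · simp [hw, h0, hK0]
    · rw [hw]
      have hm : (0 : ℝ) < m := by exact_mod_cast h0
      rw [div_le_iff₀ hm]
      refine le_trans (hks_lin m) ?_
      have hm1 : (1 : ℝ) ≤ m := by exact_mod_cast h0
      rw [hK]
      push_cast
      have hcoef : 8 * (rA : ℝ) * m + ((2 * (rA : ℝ) + 1) ^ 2) ≤
          (8 * (rA : ℝ) + (2 * (rA : ℝ) + 1) ^ 2) * m := by
        nlinarith [mul_nonneg (sq_nonneg ((2 : ℝ) * rA + 1)) (sub_nonneg.mpr hm1)]
      nlinarith [mul_le_mul_of_nonneg_right hcoef hL0, hL0]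
  have hw0 : ∀ m, 0 ≤ w m := fun m => div_nonneg (hks_nonneg m) (Nat.cast_nonneg m)
  -- final limsup comparison
  have hER : ERpart ν G (p0 (A := B)) rB = Filter.atTop.limsup
      (fun n : ℕ => ksEnt ν G (bandJoin (p0 (A := B)) rB n) / (n : ℝ)) := rfl
  have hERA : ERpart μ F (p0 (A := A)) rA = Filter.atTop.limsup w := rfl
  rw [hER, hERA, ← Filter.limsup_nat_add w S]
  refine myLimsupLe _ _
    (Filter.IsCoboundedUnder.of_frequently_ge (a := 0)
      (Filter.Frequently.of_forall fun n => div_nonneg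
        (ksEnt_nonneg G _ (hOrbBDB n)) (Nat.cast_nonneg n)))
    (Filter.isBoundedUnder_of ⟨K, fun n => hwK (n + S)⟩) ?_
  intro ε hε
  have h0 : Filter.Tendsto (fun n : ℕ => K * S / (n : ℝ)) atTop (nhds 0) :=
    tendsto_const_div_atTop_nhds_zero_nat (K * S)
  filter_upwards [h0.eventually_lt_const hε, Filter.eventually_ge_atTop 1] with n hn hn1
  have hnpos : (0 : ℝ) < n := by exact_mod_cast hn1
  have hnS : (0 : ℝ) < ((n + S : ℕ) : ℝ) := by positivity
  set ks := ksEnt μ F (bandJoin (p0 (A := A)) rA (n + S)) with hks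
  have hksK : ks ≤ K * ((n + S : ℕ) : ℝ) := by
    have := hwK (n + S)
    rw [hw, div_le_iff₀ hnS] at this
    linarith [this]
  have e1 : ksEnt ν G (bandJoin (p0 (A := B)) rB n) / (n : ℝ) ≤ ks / (n : ℝ) :=
    div_nat_mono n (key n)
  have e2 : ks / (n : ℝ) ≤ ks / ((n + S : ℕ) : ℝ) + K * S / (n : ℝ) := by
    have hS0 : (0 : ℝ) ≤ (S : ℝ) := Nat.cast_nonneg S
    have h5 : ks * (S : ℝ) ≤ K * ((n + S : ℕ) : ℝ) * (S : ℝ) :=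
      mul_le_mul_of_nonneg_right hksK hS0
    rw [div_add_div _ _ (ne_of_gt hnS) (ne_of_gt hnpos),
      div_le_div_iff₀ hnpos (mul_pos hnS hnpos)]
    have hcast : ((n + S : ℕ) : ℝ) = (n : ℝ) + (S : ℝ) := by push_cast; ring
    rw [hcast] at h5 ⊢
    nlinarith [mul_le_mul_of_nonneg_right h5 (le_of_lt hnpos), hks_nonneg (n + S), hnpos]
  have e3 : w (n + S) = ks / ((n + S : ℕ) : ℝ) := rfl
  rw [e3]
  linarith
end OneSide

end ERaux

/-- If `φ : A^{ℤ²} → B^{ℤ²}` is a bijective sliding block code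
(a continuous shift-commuting map, hence a shift-commuting homeomorphism) with
`φ∘F = G∘φ` and `φ_*μ = ν`, then `ER_μ(S_0(A^{ℤ²}),F) = ER_ν(S_0(B^{ℤ²}),G)`:
the entropy rate of the partition `S_0` is an invariant for continuous
shift-commuting isomorphisms, for every `F`-invariant measure `μ`. -/

theorem entropyRate_S0_invariant_sliding_block
    {A B : Type*} [Fintype A] [MeasurableSpace A] [TopologicalSpace A] [DiscreteTopology A]
    [DiscreteMeasurableSpace A]
    [Fintype B] [MeasurableSpace B] [TopologicalSpace B] [DiscreteTopology B]
    [DiscreteMeasurableSpace B]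
    (F : Config A → Config A) (rA : ℕ) (hF : IsCA F rA)
    (G : Config B → Config B) (rB : ℕ) (hG : IsCA G rB)
    (μ : MeasureTheory.Measure (Config A)) [MeasureTheory.IsProbabilityMeasure μ]
    (ν : MeasureTheory.Measure (Config B)) [MeasureTheory.IsProbabilityMeasure ν]
    (hFμ : MeasureTheory.MeasurePreserving F μ μ)
    (hGν : MeasureTheory.MeasurePreserving G ν ν)
    (φ : Config A → Config B) (hφcont : Continuous φ) (hφbij : Function.Bijective φ)
    (hφshift : ∀ (v : ℤ × ℤ) (x : Config A), φ (shift v x) = shift v (φ x))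
    (hφF : ∀ x : Config A, φ (F x) = G (φ x))
    (hφμ : μ.map φ = ν) :
    ERpart μ F (p0 (A := A)) rA = ERpart ν G (p0 (A := B)) rB := by
  classical
  -- φ is a homeomorphism
  have h1 : ERpart ν G (p0 (A := B)) rB ≤ ERpart μ F (p0 (A := A)) rA :=
    ERaux.ER_le F rA hF G rB hG μ ν φ hφcont hφshift hφF hφμ
  -- construct the inverse ψ
  let e : Config A ≃ Config B := Equiv.ofBijective φ hφbij
  have hecont : Continuous e := hφcont
  let h : Config A ≃ₜ Config B := hecont.homeoOfEquivCompactToT2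
  let ψ : Config B → Config A := h.symm
  have hψcont : Continuous ψ := h.symm.continuous
  have hinv1 : ∀ y, φ (ψ y) = y := fun y => h.apply_symm_apply y
  have hinv2 : ∀ x, ψ (φ x) = x := fun x => h.symm_apply_apply x
  have hψshift : ∀ (v : ℤ × ℤ) (y : Config B), ψ (shift v y) = shift v (ψ y) := by
    intro v y
    apply hφbij.1
    rw [hinv1, hφshift, hinv1]
  have hψG : ∀ y : Config B, ψ (G y) = F (ψ y) := by
    intro y
    apply hφbij.1
    rw [hinv1, hφF, hinv1]
  -- measurability of φ and ψ
  obtain ⟨s, hs⟩ := ERaux.exists_window_of_continuous (fun x => φ x (0, 0))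
    ((continuous_apply ((0, 0) : ℤ × ℤ)).comp hφcont)
  have hφmeas : Measurable φ := ERaux.measurable_of_windows φ s hs hφshift
  obtain ⟨t, ht⟩ := ERaux.exists_window_of_continuous (fun y => ψ y (0, 0))
    ((continuous_apply ((0, 0) : ℤ × ℤ)).comp hψcont)
  have hψmeas : Measurable ψ := ERaux.measurable_of_windows ψ t ht hψshift
  have hψν : ν.map ψ = μ := by
    rw [← hφμ, Measure.map_map hψmeas hφmeas]
    have : ψ ∘ φ = id := funext hinv2
    rw [this, Measure.map_id]
  have h2 : ERpart μ F (p0 (A := A)) rA ≤ ERpart ν G (p0 (A := B)) rB :=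
    ERaux.ER_le G rB hG F rA hF ν μ ψ hψcont hψshift hψG hψν
  exact le_antisymm h2 h1
end

section
/- For any cellular automaton F of radius r acting on A^{Z^2}: for any integer n ≥ r one has h(S_n, F) = h(S'_n, F); for any n ∈ N one has ER(S_n, F) = ER(S_0, F); and for all k ∈ N, ER(S_k, F) = ER(S_0, F) ≤ 8 r log(#A). -/
/-- `N(C)`: the smallest cardinality of a finite subcover of `C`. -/
noncomputable def coverNum {X ι : Type*} [Fintype ι] (C : ι → Set X) : ℕ :=
  sInf {m : ℕ | ∃ s : Finset ι, s.card = m ∧ (⋃ i ∈ s, C i) = Set.univ}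

/-- Topological entropy `h(C,F)` of an open cover `C` with respect to `F`:
the limit of `log N(⋁_{i=0}^{N-1} F^{-i} C)/N`. -/
noncomputable def covEnt {X ι : Type*} [Fintype ι] (F : X → X) (C : ι → Set X) : ℝ :=
  Filter.atTop.limsup fun N : ℕ =>
    Real.log ((coverNum fun g : Fin N → ι => ⋂ i : Fin N, (F^[(i : ℕ)]) ⁻¹' C (g i) : ℕ) : ℝ) /
      (N : ℝ)

/-- The cover `C'_n = ⋁_{v ∈ E'_n} σ^v(C)`. -/
def covBand {A ι : Type*} (C : ι → Set (Config A)) (r n : ℕ) :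
    ({v : ℤ × ℤ // v ∈ Eband r n} → ι) → Set (Config A) :=
  fun g => ⋂ v : {v : ℤ × ℤ // v ∈ Eband r n}, shift v.1 ⁻¹' C (g v)

/-- The cover `C_n = ⋁_{v ∈ E_n} σ^v(C)`. -/
def covSq {A ι : Type*} (C : ι → Set (Config A)) (n : ℕ) :
    ({v : ℤ × ℤ // v ∈ Esq n} → ι) → Set (Config A) :=
  fun g => ⋂ v : {v : ℤ × ℤ // v ∈ Esq n}, shift v.1 ⁻¹' C (g v)

/-- Topological entropy rate `ER(C,F) = limsup_n h(C'_n,F)/n` of a cover `C`,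
for a CA of radius `r`. -/
noncomputable def ERcov {A ι : Type*} [Fintype ι] (F : Config A → Config A)
    (C : ι → Set (Config A)) (r : ℕ) : ℝ :=
  Filter.atTop.limsup fun n : ℕ => covEnt F (covBand C r n) / (n : ℝ)

/-- The clopen cover `S_0` of `A^{ℤ²}` by the value of the coordinate `(0,0)`. -/
def S0cov {A : Type*} : A → Set (Config A) := fun a => {x | x (0, 0) = a}

/-- Topological entropy rate `ER(A^{ℤ²},F)`: the supremum of `ER(C,F)` over all
finite open covers `C`. -/
noncomputable def ERtop {A : Type*} [TopologicalSpace A] (F : Config A → Config A) (r : ℕ) : ℝ :=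
  sSup {x : ℝ | ∃ (m : ℕ) (C : Fin (m + 1) → Set (Config A)),
    (∀ i, IsOpen (C i)) ∧ (⋃ i, C i) = Set.univ ∧ x = ERcov F C r}

/-! ### Auxiliary development -/

open Filter Set

namespace StatementThirteen

/-! #### Geometry of squares and bands -/

lemma mem_Esq {n : ℕ} {v : ℤ × ℤ} :
    v ∈ Esq n ↔ -(n : ℤ) ≤ v.1 ∧ v.1 ≤ n ∧ -(n : ℤ) ≤ v.2 ∧ v.2 ≤ n := by
  simp only [Esq, Finset.mem_Icc, Prod.le_def]
  tauto

lemma Esq_mono {a b : ℕ} (h : a ≤ b) : Esq a ⊆ Esq b := by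
  intro v hv
  rw [mem_Esq] at hv ⊢
  have : (a : ℤ) ≤ b := by exact_mod_cast h
  omega

lemma Eband_subset_Esq {r n : ℕ} : Eband r n ⊆ Esq n := Finset.sdiff_subset

lemma mem_Esq_or (r n : ℕ) {v : ℤ × ℤ} (hv : v ∈ Esq n) :
    v ∈ Eband r n ∨ v ∈ Esq (n - r) := by
  by_cases h : v ∈ Esq (n - r)
  · exact Or.inr h
  · exact Or.inl (Finset.mem_sdiff.2 ⟨hv, h⟩)

lemma zero_mem_Esq (n : ℕ) : ((0, 0) : ℤ × ℤ) ∈ Esq n := by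
  rw [mem_Esq]
  refine ⟨?_, ?_, ?_, ?_⟩ <;> simp

lemma add_mem_Esq {r n : ℕ} (hrn : r ≤ n) {u w : ℤ × ℤ}
    (hu : u ∈ Esq (n - r)) (hw : w ∈ Esq r) : w + u ∈ Esq n := by
  rw [mem_Esq] at hu hw ⊢
  have h1 : ((n - r : ℕ) : ℤ) = (n : ℤ) - r := by
    have : (r : ℤ) ≤ n := by exact_mod_cast hrn
    omega
  simp only [Prod.fst_add, Prod.snd_add]
  omega

lemma add_mem_Esq' {a b : ℕ} {u w : ℤ × ℤ}
    (hu : u ∈ Esq a) (hw : w ∈ Esq b) : u + w ∈ Esq (a + b) := by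
  rw [mem_Esq] at hu hw ⊢
  simp only [Prod.fst_add, Prod.snd_add]
  push_cast
  omega

lemma card_Esq (n : ℕ) : (Esq n).card = (2 * n + 1) * (2 * n + 1) := by
  rw [Esq, Finset.Icc_prod_def, Finset.card_product]
  simp only [Int.card_Icc]
  have : ((n : ℤ) + 1 - -(n : ℤ)).toNat = 2 * n + 1 := by omega
  rw [this]

lemma card_Eband_le (r n : ℕ) : (Eband r n).card ≤ 8 * r * n + 4 * r := by
  rw [Eband, Finset.card_sdiff_of_subset (Esq_mono (Nat.sub_le n r)), card_Esq, card_Esq]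
  rw [Nat.sub_le_iff_le_add]
  rcases le_total r n with h | h
  · obtain ⟨k, rfl⟩ : ∃ k, n = k + r := ⟨n - r, by omega⟩
    have hk : (k + r) - r = k := by omega
    rw [hk]
    nlinarith
  · have h0 : n - r = 0 := by omega
    rw [h0]
    nlinarith

/-! #### Shifts -/

lemma zz_add (v : ℤ × ℤ) : ((0, 0) : ℤ × ℤ) + v = v := by
  cases v; simp

lemma shift_apply_origin {A : Type*} (v : ℤ × ℤ) (x : Config A) :
    shift v x (0, 0) = x v := by
  simp [shift, zz_add]

lemma shift_apply_zero {A : Type*} (v : ℤ × ℤ) (x : Config A) :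
    shift v x 0 = x v := by
  simp [shift]

/-! #### Membership in the joined covers -/

lemma mem_covSq {A : Type*} {n : ℕ} {g : {v : ℤ × ℤ // v ∈ Esq n} → A} {x : Config A} :
    x ∈ covSq (S0cov (A := A)) n g ↔ ∀ v : {v : ℤ × ℤ // v ∈ Esq n}, x v.1 = g v := by
  simp [covSq, S0cov, shift_apply_origin, shift_apply_zero]

lemma mem_covBand {A : Type*} {r m : ℕ} {g : {v : ℤ × ℤ // v ∈ Eband r m} → A}
    {x : Config A} :
    x ∈ covBand (S0cov (A := A)) r m g ↔
      ∀ v : {v : ℤ × ℤ // v ∈ Eband r m}, x v.1 = g v := by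
  simp [covBand, S0cov, shift_apply_origin, shift_apply_zero]

lemma mem_covBand_covSq {A : Type*} {r n m : ℕ}
    {g : {v : ℤ × ℤ // v ∈ Eband r m} → ({w : ℤ × ℤ // w ∈ Esq n} → A)} {x : Config A} :
    x ∈ covBand (covSq (S0cov (A := A)) n) r m g ↔
      ∀ (v : {v : ℤ × ℤ // v ∈ Eband r m}) (w : {w : ℤ × ℤ // w ∈ Esq n}),
        x (w.1 + v.1) = g v w := by
  simp only [covBand, covSq, mem_iInter, mem_preimage, S0cov, mem_setOf_eq]
  constructor
  · intro h v w
    have := h v w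
    simpa [shift, zz_add] using this
  · intro h v w
    simpa [shift, zz_add] using h v w

/-! #### The local rule and determination -/

lemma iterate_shift {A : Type*} {F : Config A → Config A} {r : ℕ} (hF : IsCA F r)
    (i : ℕ) (v : ℤ × ℤ) (x : Config A) : F^[i] (shift v x) = shift v (F^[i] x) := by
  induction i generalizing x with
  | zero => rfl
  | succ i ih =>
    rw [Function.iterate_succ_apply, Function.iterate_succ_apply, hF.1, ih]

lemma F_apply_eq {A : Type*} {F : Config A → Config A} {r : ℕ} (hF : IsCA F r)
    {x y : Config A} (u : ℤ × ℤ) (h : ∀ w ∈ Esq r, x (w + u) = y (w + u)) :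
    F x u = F y u := by
  have hx : F x u = F (shift u x) (0, 0) := by
    rw [hF.1, shift_apply_origin]
  have hy : F y u = F (shift u y) (0, 0) := by
    rw [hF.1, shift_apply_origin]
  rw [hx, hy]
  apply hF.2
  intro w hw
  simpa [shift] using h w hw

lemma determine {A : Type*} {F : Config A → Config A} {r : ℕ} (hF : IsCA F r)
    {m : ℕ} (hrm : r ≤ m) {x y : Config A} (N : ℕ)
    (h0 : ∀ u ∈ Esq m, x u = y u)
    (hb : ∀ i < N, ∀ u ∈ Eband r m, F^[i] x u = F^[i] y u) :
    ∀ i < N, ∀ u ∈ Esq m, F^[i] x u = F^[i] y u := by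
  intro i
  induction i with
  | zero => intro _; simpa using h0
  | succ i ih =>
    intro hiN u hu
    rcases mem_Esq_or r m hu with h | h
    · exact hb (i + 1) hiN u h
    · rw [Function.iterate_succ_apply', Function.iterate_succ_apply']
      apply F_apply_eq hF
      intro w hw
      exact ih (Nat.lt_of_succ_lt hiN) _ (add_mem_Esq hrm h hw)

/-! #### coverNum lemmas -/

section CoverNum

variable {X I J : Type*} [Fintype I] [Fintype J]

lemma exists_min_subcover (C : I → Set X) (hC : ⋃ i, C i = Set.univ) :
    ∃ s : Finset I, s.card = coverNum C ∧ (⋃ i ∈ s, C i) = Set.univ := by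
  have hmem : coverNum C ∈ {m : ℕ | ∃ s : Finset I, s.card = m ∧ (⋃ i ∈ s, C i) = Set.univ} := by
    apply Nat.sInf_mem
    exact ⟨Finset.univ.card, Finset.univ, rfl, by simpa using hC⟩
  obtain ⟨s, hs1, hs2⟩ := hmem
  exact ⟨s, hs1, hs2⟩

lemma coverNum_le_card (C : I → Set X) (hC : ⋃ i, C i = Set.univ) :
    coverNum C ≤ Fintype.card I :=
  Nat.sInf_le ⟨Finset.univ, rfl, by simpa using hC⟩

lemma one_le_coverNum [Nonempty X] (C : I → Set X) (hC : ⋃ i, C i = Set.univ) :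
    1 ≤ coverNum C := by
  obtain ⟨s, hs, hcov⟩ := exists_min_subcover C hC
  rcases Nat.eq_zero_or_pos (coverNum C) with h | h
  · exfalso
    rw [h, Finset.card_eq_zero] at hs
    subst hs
    simp only [Finset.notMem_empty, iUnion_of_empty, iUnion_empty] at hcov
    exact (Set.univ_nonempty).ne_empty hcov.symm
  · exact h

lemma coverNum_le_of_refine (C : I → Set X) (D : J → Set X)
    (hD : ⋃ j, D j = Set.univ) (h : ∀ j, ∃ i, D j ⊆ C i) :
    coverNum C ≤ coverNum D := by
  classical
  obtain ⟨s, hs, hcov⟩ := exists_min_subcover D hD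
  choose f hf using h
  have hmem : (s.image f).card ∈
      {m : ℕ | ∃ t : Finset I, t.card = m ∧ (⋃ i ∈ t, C i) = Set.univ} := by
    refine ⟨s.image f, rfl, ?_⟩
    apply Set.eq_univ_of_univ_subset
    rw [← hcov]
    intro x hx
    simp only [mem_iUnion] at hx ⊢
    obtain ⟨j, hj, hxj⟩ := hx
    exact ⟨f j, Finset.mem_image_of_mem f hj, hf j hxj⟩
  calc coverNum C ≤ (s.image f).card := Nat.sInf_le hmem
    _ ≤ s.card := Finset.card_image_le
    _ = coverNum D := hs

lemma coverNum_prod_le (C : I → Set X) (D : J → Set X)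
    (hC : ⋃ i, C i = Set.univ) (hD : ⋃ j, D j = Set.univ) :
    coverNum (fun p : I × J => C p.1 ∩ D p.2) ≤ Fintype.card I * coverNum D := by
  classical
  obtain ⟨s, hs, hcov⟩ := exists_min_subcover D hD
  have hmem : (((Finset.univ : Finset I) ×ˢ s)).card ∈
      {m : ℕ | ∃ t : Finset (I × J), t.card = m ∧
        (⋃ p ∈ t, (C p.1 ∩ D p.2)) = Set.univ} := by
    refine ⟨((Finset.univ : Finset I) ×ˢ s), rfl, ?_⟩
    apply Set.eq_univ_of_univ_subset
    intro x _
    have hx1 : x ∈ ⋃ i, C i := hC ▸ Set.mem_univ x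
    have hx2 : x ∈ ⋃ j ∈ s, D j := hcov ▸ Set.mem_univ x
    simp only [mem_iUnion] at hx1 hx2 ⊢
    obtain ⟨i, hi⟩ := hx1
    obtain ⟨j, hj, hxj⟩ := hx2
    exact ⟨(i, j), Finset.mem_product.2 ⟨Finset.mem_univ i, hj⟩, hi, hxj⟩
  calc coverNum (fun p : I × J => C p.1 ∩ D p.2) ≤ (((Finset.univ : Finset I) ×ˢ s)).card :=
      Nat.sInf_le hmem
    _ = Fintype.card I * s.card := by rw [Finset.card_product, Finset.card_univ]
    _ = Fintype.card I * coverNum D := by rw [hs]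

end CoverNum

/-! #### covEnt lemmas -/

section CovEnt

variable {X ι κ : Type*} [Fintype ι] [Fintype κ] (F : X → X)

/-- The `N`-fold join cell of a cover under `F`. -/
def jcell (C : ι → Set X) (N : ℕ) : (Fin N → ι) → Set X :=
  fun g => ⋂ i : Fin N, F^[(i : ℕ)] ⁻¹' C (g i)

lemma covEnt_eq (C : ι → Set X) :
    covEnt F C = Filter.atTop.limsup
      (fun N : ℕ => Real.log ((coverNum (jcell F C N) : ℕ) : ℝ) / (N : ℝ)) := rfl

lemma jcell_cover {C : ι → Set X} (hC : ⋃ i, C i = Set.univ) (N : ℕ) :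
    ⋃ g, jcell F C N g = Set.univ := by
  have hex : ∀ y : X, ∃ i, y ∈ C i := by
    intro y
    have : y ∈ ⋃ i, C i := hC ▸ Set.mem_univ y
    simpa using this
  choose f hf using hex
  apply Set.eq_univ_of_univ_subset
  intro x _
  simp only [mem_iUnion]
  exact ⟨fun i => f (F^[(i : ℕ)] x), by
    simp only [jcell, mem_iInter, mem_preimage]
    intro i
    exact hf _⟩

lemma log_nat_mono {a b : ℕ} (h : a ≤ b) : Real.log a ≤ Real.log b := by
  rcases Nat.eq_zero_or_pos a with rfl | ha
  · simpa using Real.log_natCast_nonneg b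
  · exact Real.log_le_log (by exact_mod_cast ha) (by exact_mod_cast h)

lemma covEnt_term_nonneg (C : ι → Set X) (N : ℕ) :
    0 ≤ Real.log ((coverNum (jcell F C N) : ℕ) : ℝ) / (N : ℝ) :=
  div_nonneg (Real.log_natCast_nonneg _) (Nat.cast_nonneg _)

lemma covEnt_term_le [Nonempty X] {C : ι → Set X} (hC : ⋃ i, C i = Set.univ) (N : ℕ) :
    Real.log ((coverNum (jcell F C N) : ℕ) : ℝ) / (N : ℝ) ≤ Real.log (Fintype.card ι) := by
  have hι : Nonempty ι := by
    obtain ⟨x⟩ := ‹Nonempty X›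
    have : x ∈ ⋃ i, C i := hC ▸ Set.mem_univ x
    simp only [mem_iUnion] at this
    exact ⟨this.choose⟩
  have hcard : 1 ≤ Fintype.card ι := Fintype.card_pos
  rcases Nat.eq_zero_or_pos N with rfl | hN
  · simp only [Nat.cast_zero, div_zero]
    exact Real.log_natCast_nonneg _
  · have h1 : coverNum (jcell F C N) ≤ Fintype.card ι ^ N := by
      refine le_trans (coverNum_le_card _ (jcell_cover F hC N)) ?_
      rw [Fintype.card_fun, Fintype.card_fin]
    have h2 : Real.log ((coverNum (jcell F C N) : ℕ) : ℝ) ≤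
        (N : ℝ) * Real.log (Fintype.card ι) := by
      calc Real.log ((coverNum (jcell F C N) : ℕ) : ℝ)
          ≤ Real.log ((Fintype.card ι ^ N : ℕ) : ℝ) := log_nat_mono h1
        _ = (N : ℝ) * Real.log (Fintype.card ι) := by
            rw [Nat.cast_pow, Real.log_pow]
    rw [div_le_iff₀ (by exact_mod_cast hN : (0 : ℝ) < N)]
    linarith [h2]

lemma covEnt_nonneg [Nonempty X] {C : ι → Set X} (hC : ⋃ i, C i = Set.univ) :
    0 ≤ covEnt F C := by
  rw [covEnt_eq]
  exact Filter.le_limsup_of_frequently_le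
    (Frequently.of_forall (covEnt_term_nonneg F C))
    (Filter.isBoundedUnder_of ⟨Real.log (Fintype.card ι), fun N => covEnt_term_le F hC N⟩)

lemma covEnt_le_log_card [Nonempty X] {C : ι → Set X} (hC : ⋃ i, C i = Set.univ) :
    covEnt F C ≤ Real.log (Fintype.card ι) := by
  rw [covEnt_eq]
  exact Filter.limsup_le_of_le
    (Filter.isCoboundedUnder_le_of_le Filter.atTop (covEnt_term_nonneg F C))
    (Eventually.of_forall (covEnt_term_le F hC))

lemma div_le_div_nn {a b c : ℝ} (h : a ≤ b) (hc : 0 ≤ c) : a / c ≤ b / c := by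
  obtain rfl | hc := hc.eq_or_lt
  · simp
  · gcongr

lemma coverNum_jcell_le_of_refine {C : ι → Set X} {D : κ → Set X}
    (hD : ⋃ j, D j = Set.univ) (h : ∀ j, ∃ i, D j ⊆ C i) [Nonempty ι] (N : ℕ) :
    coverNum (jcell F C N) ≤ coverNum (jcell F D N) := by
  apply coverNum_le_of_refine _ _ (jcell_cover F hD N)
  intro g
  choose f hf using h
  refine ⟨fun i => f (g i), ?_⟩
  exact iInter_mono fun i => preimage_mono (hf (g i))

lemma covEnt_le_of_refine [Nonempty X] {C : ι → Set X} {D : κ → Set X}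
    (hD : ⋃ j, D j = Set.univ) (h : ∀ j, ∃ i, D j ⊆ C i) [Nonempty ι] :
    covEnt F C ≤ covEnt F D := by
  rw [covEnt_eq, covEnt_eq]
  apply Filter.limsup_le_limsup
  · apply Eventually.of_forall
    intro N
    exact div_le_div_nn (log_nat_mono (coverNum_jcell_le_of_refine F hD h N))
      (Nat.cast_nonneg _)
  · exact Filter.isCoboundedUnder_le_of_le Filter.atTop (covEnt_term_nonneg F C)
  · exact Filter.isBoundedUnder_of ⟨Real.log (Fintype.card κ),
      fun N => covEnt_term_le F hD N⟩

end CovEnt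

/-! #### A limsup comparison helper -/

lemma limsup_le_limsup_of_le_add {f g e : ℕ → ℝ} (hf0 : ∀ n, 0 ≤ f n)
    (K : ℝ) (hgK : ∀ n, g n ≤ K)
    (hfg : ∀ᶠ n in atTop, f n ≤ g n + e n)
    (he : Tendsto e atTop (nhds 0)) :
    limsup f atTop ≤ limsup g atTop := by
  have key : ∀ ε : ℝ, 0 < ε → limsup f atTop ≤ limsup g atTop + ε := by
    intro ε hε
    have hb : IsBoundedUnder (· ≤ ·) atTop g := Filter.isBoundedUnder_of ⟨K, hgK⟩
    have h1 : ∀ᶠ n in atTop, g n < limsup g atTop + ε / 2 :=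
      Filter.eventually_lt_of_limsup_lt (lt_add_of_pos_right _ (by linarith)) hb
    have h2 : ∀ᶠ n in atTop, e n < ε / 2 :=
      he.eventually (eventually_lt_nhds (by linarith : (0 : ℝ) < ε / 2))
    have h3 : ∀ᶠ n in atTop, f n ≤ limsup g atTop + ε := by
      filter_upwards [hfg, h1, h2] with n ha hb' hc
      linarith
    exact Filter.limsup_le_of_le (Filter.isCoboundedUnder_le_of_le atTop hf0) h3
  by_contra hcon
  push_neg at hcon
  have := key ((limsup f atTop - limsup g atTop) / 2) (by linarith)
  linarith

/-! #### Covers of the full space -/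

section Covers

variable {A ι : Type*} [Fintype ι]

lemma covSq_cover (C : ι → Set (Config A)) (hC : ⋃ i, C i = Set.univ) (n : ℕ) :
    ⋃ g, covSq C n g = Set.univ := by
  have hex : ∀ y : Config A, ∃ i, y ∈ C i := by
    intro y
    have : y ∈ ⋃ i, C i := hC ▸ Set.mem_univ y
    simpa using this
  choose f hf using hex
  apply Set.eq_univ_of_univ_subset
  intro x _
  simp only [mem_iUnion]
  exact ⟨fun v => f (shift v.1 x), by
    simp only [covSq, mem_iInter, mem_preimage]
    intro v
    exact hf _⟩

lemma covBand_cover (C : ι → Set (Config A)) (hC : ⋃ i, C i = Set.univ) (r m : ℕ) :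
    ⋃ g, covBand C r m g = Set.univ := by
  have hex : ∀ y : Config A, ∃ i, y ∈ C i := by
    intro y
    have : y ∈ ⋃ i, C i := hC ▸ Set.mem_univ y
    simpa using this
  choose f hf using hex
  apply Set.eq_univ_of_univ_subset
  intro x _
  simp only [mem_iUnion]
  exact ⟨fun v => f (shift v.1 x), by
    simp only [covBand, mem_iInter, mem_preimage]
    intro v
    exact hf _⟩

lemma S0_cover : ⋃ a : A, S0cov (A := A) a = Set.univ := by
  apply Set.eq_univ_of_univ_subset
  intro x _
  exact Set.mem_iUnion.2 ⟨x (0, 0), rfl⟩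

end Covers

/-! #### Claim 1: `h(S_m, F) = h(S'_m, F)` for `m ≥ r` -/

section Claim1

variable {A : Type*} [Fintype A] [Nonempty A] (F : Config A → Config A) (r : ℕ)

lemma coverNum_sq_le (hF : IsCA F r) {m : ℕ} (hrm : r ≤ m) (N : ℕ) :
    coverNum (jcell F (covSq (S0cov (A := A)) m) N) ≤
      Fintype.card ({v : ℤ × ℤ // v ∈ Esq m} → A) *
        coverNum (jcell F (covBand (S0cov (A := A)) r m) N) := by
  set Cs := covSq (S0cov (A := A)) m with hCs
  set Cb := covBand (S0cov (A := A)) r m with hCb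
  set mixed : (({v : ℤ × ℤ // v ∈ Esq m} → A) ×
      (Fin N → ({v : ℤ × ℤ // v ∈ Eband r m} → A))) → Set (Config A) :=
    fun p => Cs p.1 ∩ jcell F Cb N p.2 with hmixed
  have hmixcov : ⋃ p, mixed p = Set.univ := by
    apply Set.eq_univ_of_univ_subset
    intro x _
    simp only [mem_iUnion]
    refine ⟨(fun v => x v.1, fun i => fun v => F^[(i : ℕ)] x v.1), ?_, ?_⟩
    · rw [hCs, mem_covSq]; intro v; rfl
    · simp only [jcell, mem_iInter, mem_preimage]
      intro i
      rw [hCb, mem_covBand]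
      intro v; rfl
  have hrefine : ∀ p, ∃ h : Fin N → ({v : ℤ × ℤ // v ∈ Esq m} → A),
      mixed p ⊆ jcell F Cs N h := by
    intro p
    by_cases hne : (mixed p).Nonempty
    · obtain ⟨x0, hx0⟩ := hne
      refine ⟨fun i => fun v => F^[(i : ℕ)] x0 v.1, ?_⟩
      intro y hy
      have h0 : ∀ u ∈ Esq m, y u = x0 u := by
        intro u hu
        have h1 := mem_covSq.1 hy.1 ⟨u, hu⟩
        have h2 := mem_covSq.1 hx0.1 ⟨u, hu⟩
        rw [h1, h2]
      have hb : ∀ i < N, ∀ u ∈ Eband r m, F^[i] y u = F^[i] x0 u := by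
        intro i hiN u hu
        have hy2 := Set.mem_iInter.1 hy.2 ⟨i, hiN⟩
        have hx2 := Set.mem_iInter.1 hx0.2 ⟨i, hiN⟩
        rw [Set.mem_preimage, hCb, mem_covBand] at hy2 hx2
        have h1 := hy2 ⟨u, hu⟩
        have h2 := hx2 ⟨u, hu⟩
        simp only at h1 h2
        rw [h1, h2]
      have key := determine hF hrm N h0 hb
      simp only [jcell, mem_iInter, mem_preimage]
      intro i
      rw [hCs, mem_covSq]
      intro v
      exact key i i.2 v.1 v.2
    · exact ⟨Classical.arbitrary _, fun y hy => absurd ⟨y, hy⟩ hne⟩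
  calc coverNum (jcell F Cs N) ≤ coverNum mixed :=
      coverNum_le_of_refine _ _ hmixcov hrefine
    _ ≤ Fintype.card ({v : ℤ × ℤ // v ∈ Esq m} → A) * coverNum (jcell F Cb N) :=
      coverNum_prod_le _ _ (covSq_cover _ S0_cover m)
        (jcell_cover F (covBand_cover _ S0_cover r m) N)

lemma covEnt_covSq_eq_covBand (hF : IsCA F r) {m : ℕ} (hrm : r ≤ m) :
    covEnt F (covSq (S0cov (A := A)) m) = covEnt F (covBand (S0cov (A := A)) r m) := by
  apply le_antisymm
  · rw [covEnt_eq, covEnt_eq]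
    set c : ℕ := Fintype.card ({v : ℤ × ℤ // v ∈ Esq m} → A) with hc
    have hc1 : 1 ≤ c := Fintype.card_pos
    apply limsup_le_limsup_of_le_add (covEnt_term_nonneg F _)
      (Real.log (Fintype.card ({v : ℤ × ℤ // v ∈ Eband r m} → A)))
      (covEnt_term_le F (covBand_cover _ S0_cover r m))
      (e := fun N : ℕ => Real.log c / (N : ℝ))
    · apply Eventually.of_forall
      intro N
      have hcb1 : 1 ≤ coverNum (jcell F (covBand (S0cov (A := A)) r m) N) :=
        one_le_coverNum _ (jcell_cover F (covBand_cover _ S0_cover r m) N)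
      have hlog : Real.log ((coverNum (jcell F (covSq (S0cov (A := A)) m) N) : ℕ) : ℝ) ≤
          Real.log ((coverNum (jcell F (covBand (S0cov (A := A)) r m) N) : ℕ) : ℝ) +
            Real.log (c : ℝ) := by
        calc Real.log ((coverNum (jcell F (covSq (S0cov (A := A)) m) N) : ℕ) : ℝ)
            ≤ Real.log (((c * coverNum (jcell F (covBand (S0cov (A := A)) r m) N) : ℕ)) : ℝ) :=
              log_nat_mono (coverNum_sq_le F r hF hrm N)
          _ = Real.log ((coverNum (jcell F (covBand (S0cov (A := A)) r m) N) : ℕ) : ℝ) +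
              Real.log (c : ℝ) := by
              push_cast
              rw [Real.log_mul (by exact_mod_cast Nat.one_le_iff_ne_zero.1 hc1)
                (by exact_mod_cast Nat.one_le_iff_ne_zero.1 hcb1)]
              ring
      calc Real.log ((coverNum (jcell F (covSq (S0cov (A := A)) m) N) : ℕ) : ℝ) / (N : ℝ)
          ≤ (Real.log ((coverNum (jcell F (covBand (S0cov (A := A)) r m) N) : ℕ) : ℝ) +
              Real.log (c : ℝ)) / (N : ℝ) :=
            div_le_div_nn hlog (Nat.cast_nonneg _)
        _ = Real.log ((coverNum (jcell F (covBand (S0cov (A := A)) r m) N) : ℕ) : ℝ) / (N : ℝ) +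
            Real.log (c : ℝ) / (N : ℝ) := add_div _ _ _
    · exact tendsto_const_div_atTop_nhds_zero_nat _
  · apply covEnt_le_of_refine F (covSq_cover _ S0_cover m)
    intro g
    refine ⟨fun v => g ⟨v.1, Eband_subset_Esq v.2⟩, ?_⟩
    intro x hx
    rw [mem_covSq] at hx
    rw [mem_covBand]
    intro v
    exact hx ⟨v.1, Eband_subset_Esq v.2⟩

end Claim1

/-! #### Bounds on band entropies -/

section Bounds

variable {A : Type*} [Fintype A] [Nonempty A] {ι : Type*} [Fintype ι] [Nonempty ι]

lemma ERcov_eq (F : Config A → Config A) (C : ι → Set (Config A)) (r : ℕ) :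
    ERcov F C r =
      Filter.atTop.limsup (fun m : ℕ => covEnt F (covBand C r m) / (m : ℝ)) := rfl

lemma covEnt_covBand_le (F : Config A → Config A) {C : ι → Set (Config A)}
    (hC : ⋃ i, C i = Set.univ) (r m : ℕ) :
    covEnt F (covBand C r m) ≤
      ((8 * r * m + 4 * r : ℕ) : ℝ) * Real.log (Fintype.card ι) := by
  refine le_trans (covEnt_le_log_card F (covBand_cover _ hC r m)) ?_
  rw [Fintype.card_fun, Fintype.card_coe, Nat.cast_pow, Real.log_pow]
  apply mul_le_mul_of_nonneg_right _ (Real.log_natCast_nonneg _)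
  exact_mod_cast card_Eband_le r m

lemma covEnt_covBand_div_le (F : Config A → Config A) {C : ι → Set (Config A)}
    (hC : ⋃ i, C i = Set.univ) (r m : ℕ) :
    covEnt F (covBand C r m) / (m : ℝ) ≤ 12 * r * Real.log (Fintype.card ι) := by
  rcases Nat.eq_zero_or_pos m with rfl | hm
  · simp only [Nat.cast_zero, div_zero]
    positivity
  · have hm' : (0 : ℝ) < m := by exact_mod_cast hm
    rw [div_le_iff₀ hm']
    refine le_trans (covEnt_covBand_le F hC r m) ?_
    have h1 : ((8 * r * m + 4 * r : ℕ) : ℝ) ≤ 12 * r * m := by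
      push_cast
      have : (1 : ℝ) ≤ m := by exact_mod_cast hm
      nlinarith [Nat.cast_nonneg (α := ℝ) r]
    calc ((8 * r * m + 4 * r : ℕ) : ℝ) * Real.log (Fintype.card ι)
        ≤ (12 * r * m) * Real.log (Fintype.card ι) :=
          mul_le_mul_of_nonneg_right h1 (Real.log_natCast_nonneg _)
      _ = 12 * r * Real.log (Fintype.card ι) * m := by ring

end Bounds

/-! #### `ER(S_n, F) = ER(S_0, F)` -/

section ER

variable {A : Type*} [Fintype A] [Nonempty A] (F : Config A → Config A) (r : ℕ)

lemma ERcov_covSq_le (hF : IsCA F r) (n : ℕ) :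
    ERcov F (covSq (S0cov (A := A)) n) r ≤ ERcov F (S0cov (A := A)) r := by
  have hLnn : (0 : ℝ) ≤ Real.log (Fintype.card A) := Real.log_natCast_nonneg _
  set L : ℝ := Real.log (Fintype.card A) with hL
  have hshift : Filter.atTop.limsup
      (fun m : ℕ => covEnt F (covBand (S0cov (A := A)) r (m + n)) / ((m + n : ℕ) : ℝ)) =
      ERcov F (S0cov (A := A)) r :=
    Filter.limsup_nat_add (fun m : ℕ => covEnt F (covBand (S0cov (A := A)) r m) / (m : ℝ)) n
  rw [ERcov_eq, ← hshift]
  apply limsup_le_limsup_of_le_add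
    (f := fun m : ℕ => covEnt F (covBand (covSq (S0cov (A := A)) n) r m) / (m : ℝ))
    (fun m => div_nonneg (covEnt_nonneg F (covBand_cover _ (covSq_cover _ S0_cover n) r m))
      (Nat.cast_nonneg _))
    (12 * r * L)
    (e := fun m : ℕ => (12 * r * L * n) / (m : ℝ))
  · intro m
    have := covEnt_covBand_div_le F (C := S0cov (A := A)) S0_cover r (m + n)
    simpa using this
  · rw [eventually_atTop]
    refine ⟨max r 1, fun m hm => ?_⟩
    have hmr : r ≤ m := le_trans (le_max_left _ _) hm
    have hm1 : 1 ≤ m := le_trans (le_max_right _ _) hm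
    have hm' : (0 : ℝ) < m := by exact_mod_cast hm1
    have hmn' : (0 : ℝ) < ((m + n : ℕ) : ℝ) := by positivity
    -- step 1 : refinement into the square of side m+n
    have step1 : covEnt F (covBand (covSq (S0cov (A := A)) n) r m) ≤
        covEnt F (covSq (S0cov (A := A)) (m + n)) := by
      apply covEnt_le_of_refine F (covSq_cover _ S0_cover (m + n))
      intro g
      have hmem : ∀ (v : {v : ℤ × ℤ // v ∈ Eband r m}) (w : {w : ℤ × ℤ // w ∈ Esq n}),
          w.1 + v.1 ∈ Esq (m + n) := by
        intro v w
        rw [Nat.add_comm]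
        exact add_mem_Esq' w.2 (Eband_subset_Esq v.2)
      refine ⟨fun v => fun w => g ⟨w.1 + v.1, hmem v w⟩, ?_⟩
      intro x hx
      rw [mem_covSq] at hx
      rw [mem_covBand_covSq]
      intro v w
      exact hx ⟨w.1 + v.1, hmem v w⟩
    -- step 2 : Claim 1 at radius m+n
    have step2 : covEnt F (covSq (S0cov (A := A)) (m + n)) =
        covEnt F (covBand (S0cov (A := A)) r (m + n)) :=
      covEnt_covSq_eq_covBand F r hF (le_trans hmr (Nat.le_add_right m n))
    set c : ℝ := covEnt F (covBand (S0cov (A := A)) r (m + n)) with hcdef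
    have hc0 : 0 ≤ c := covEnt_nonneg F (covBand_cover _ S0_cover r (m + n))
    have hcK : c / ((m + n : ℕ) : ℝ) ≤ 12 * r * L :=
      covEnt_covBand_div_le F S0_cover r (m + n)
    have hc2 : c ≤ 12 * r * L * ((m + n : ℕ) : ℝ) := by
      rw [div_le_iff₀ hmn'] at hcK
      exact hcK
    have key : c / (m : ℝ) ≤ c / ((m + n : ℕ) : ℝ) + (12 * r * L * n) / (m : ℝ) := by
      rw [div_add_div _ _ (ne_of_gt hmn') (ne_of_gt hm'), div_le_div_iff₀ hm'
        (by positivity)]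
      have hn0 : (0 : ℝ) ≤ (n : ℝ) := Nat.cast_nonneg n
      have hcast : ((m + n : ℕ) : ℝ) = (m : ℝ) + (n : ℝ) := by push_cast; ring
      rw [hcast] at hc2 ⊢
      nlinarith [mul_le_mul_of_nonneg_right hc2 (mul_nonneg hn0 (le_of_lt hm')),
        mul_nonneg (mul_nonneg hc0 hn0) (le_of_lt hm')]
    calc covEnt F (covBand (covSq (S0cov (A := A)) n) r m) / (m : ℝ)
        ≤ c / (m : ℝ) := div_le_div_nn (step2 ▸ step1) (Nat.cast_nonneg _)
      _ ≤ c / ((m + n : ℕ) : ℝ) + (12 * r * L * n) / (m : ℝ) := key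
  · exact tendsto_const_div_atTop_nhds_zero_nat _

lemma ERcov_le_covSq (n : ℕ) :
    ERcov F (S0cov (A := A)) r ≤ ERcov F (covSq (S0cov (A := A)) n) r := by
  rw [ERcov_eq, ERcov_eq]
  apply Filter.limsup_le_limsup
  · apply Eventually.of_forall
    intro m
    apply div_le_div_nn _ (Nat.cast_nonneg _)
    apply covEnt_le_of_refine F (covBand_cover _ (covSq_cover _ S0_cover n) r m)
    intro g
    refine ⟨fun v => g v ⟨(0, 0), zero_mem_Esq n⟩, ?_⟩
    intro x hx
    rw [mem_covBand_covSq] at hx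
    rw [mem_covBand]
    intro v
    have := hx v ⟨(0, 0), zero_mem_Esq n⟩
    simpa [zz_add] using this
  · exact Filter.isCoboundedUnder_le_of_le Filter.atTop fun m =>
      div_nonneg (covEnt_nonneg F (covBand_cover _ S0_cover r m)) (Nat.cast_nonneg _)
  · exact Filter.isBoundedUnder_of ⟨12 * r * Real.log (Fintype.card ({w : ℤ × ℤ // w ∈ Esq n} → A)),
      fun m => covEnt_covBand_div_le F (covSq_cover _ S0_cover n) r m⟩

lemma ERcov_covSq_eq (hF : IsCA F r) (n : ℕ) :
    ERcov F (covSq (S0cov (A := A)) n) r = ERcov F (S0cov (A := A)) r :=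
  le_antisymm (ERcov_covSq_le F r hF n) (ERcov_le_covSq F r n)

lemma ERcov_S0_le :
    ERcov F (S0cov (A := A)) r ≤ 8 * (r : ℝ) * Real.log (Fintype.card A) := by
  set L : ℝ := Real.log (Fintype.card A) with hL
  have hLnn : (0 : ℝ) ≤ L := Real.log_natCast_nonneg _
  rw [ERcov_eq]
  have hconst : Filter.atTop.limsup (fun _ : ℕ => 8 * (r : ℝ) * L) = 8 * (r : ℝ) * L :=
    Filter.limsup_const _
  rw [← hconst]
  apply limsup_le_limsup_of_le_add
    (fun m => div_nonneg (covEnt_nonneg F (covBand_cover _ S0_cover r m)) (Nat.cast_nonneg _))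
    (8 * (r : ℝ) * L) (fun _ => le_refl _)
    (e := fun m : ℕ => (4 * r * L) / (m : ℝ))
  · rw [eventually_atTop]
    refine ⟨1, fun m hm => ?_⟩
    have hm' : (0 : ℝ) < m := by exact_mod_cast hm
    have h1 : covEnt F (covBand (S0cov (A := A)) r m) ≤ ((8 * r * m + 4 * r : ℕ) : ℝ) * L :=
      covEnt_covBand_le F S0_cover r m
    rw [div_le_iff₀ hm']
    calc covEnt F (covBand (S0cov (A := A)) r m) ≤ ((8 * r * m + 4 * r : ℕ) : ℝ) * L := h1
      _ = (8 * (r : ℝ) * L + 4 * r * L / (m : ℝ)) * (m : ℝ) := by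
          push_cast
          field_simp
  · exact tendsto_const_div_atTop_nhds_zero_nat _

end ER

/-! #### The degenerate empty-alphabet case -/

section EmptyCase

lemma coverNum_of_isEmpty {X ι : Type*} [Fintype ι] [IsEmpty X] (C : ι → Set X) :
    coverNum C = 0 := by
  apply Nat.sInf_eq_zero.2
  left
  refine ⟨∅, Finset.card_empty, ?_⟩
  rw [Set.univ_eq_empty_iff.mpr ‹_›]
  simp

lemma covEnt_of_isEmpty {X ι : Type*} [Fintype ι] [IsEmpty X] (F : X → X) (C : ι → Set X) :
    covEnt F C = 0 := by
  rw [covEnt_eq]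
  simp only [coverNum_of_isEmpty, Nat.cast_zero, Real.log_zero, zero_div]
  exact Filter.limsup_const 0

lemma ERcov_of_isEmpty {A ι : Type*} [Fintype ι] [IsEmpty (Config A)]
    (F : Config A → Config A) (C : ι → Set (Config A)) (r : ℕ) :
    ERcov F C r = 0 := by
  have : ∀ m : ℕ, covEnt F (covBand C r m) = 0 := fun m => covEnt_of_isEmpty F _
  unfold ERcov
  simp only [this, zero_div]
  exact Filter.limsup_const 0

end EmptyCase

end StatementThirteen

/-- For any CA `F` of radius `r` on `A^{ℤ²}`: for `n ≥ r`,
`h(S_n,F) = h(S'_n,F)`; for every `n`, `ER(S_n,F) = ER(S_0,F)`; and for every `k`,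
`ER(S_k,F) = ER(S_0,F) ≤ 8·r·log #A`. -/
theorem topEntropyRate_S_partitions {A : Type*} [Fintype A]
    [TopologicalSpace A] [DiscreteTopology A]
    (F : Config A → Config A) (r : ℕ) (hF : IsCA F r) :
    (∀ n : ℕ, r ≤ n →
      covEnt F (covSq (S0cov (A := A)) n) = covEnt F (covBand (S0cov (A := A)) r n)) ∧
    (∀ n : ℕ, ERcov F (covSq (S0cov (A := A)) n) r = ERcov F (S0cov (A := A)) r) ∧
    ERcov F (S0cov (A := A)) r ≤ 8 * (r : ℝ) * Real.log (Fintype.card A) := by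
  open StatementThirteen in
  by_cases hA : IsEmpty A
  · haveI := hA
    haveI : IsEmpty (Config A) := ⟨fun x => hA.false (x (0, 0))⟩
    have hcardA : Fintype.card A = 0 := Fintype.card_eq_zero
    refine ⟨fun n _ => ?_, fun n => ?_, ?_⟩
    · rw [covEnt_of_isEmpty, covEnt_of_isEmpty]
    · rw [ERcov_of_isEmpty, ERcov_of_isEmpty]
    · rw [ERcov_of_isEmpty, hcardA]
      simp
  · haveI : Nonempty A := not_isEmpty_iff.1 hA
    exact ⟨fun n hn => covEnt_covSq_eq_covBand F r hF hn,
      fun n => ERcov_covSq_eq F r hF n, ERcov_S0_le F r⟩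
end

section
/- For any cellular automaton F on A^{Z^2}, the topological entropy rate satisfies ER(A^{Z^2}, F) = ER(S_0, F), where ER(A^{Z^2}, F) is the supremum of ER(C, F) over all finite open covers C of A^{Z^2}. -/
/-! ### Auxiliary lemmas -/


open Filter Set

section Basic
variable {A : Type*}

@[simp] lemma zero_pair_add (u : ℤ × ℤ) : ((0 : ℤ), (0 : ℤ)) + u = u := by
  cases u; simp

lemma mem_Esq {n : ℕ} {v : ℤ × ℤ} :
    v ∈ Esq n ↔ -(n : ℤ) ≤ v.1 ∧ v.1 ≤ (n : ℤ) ∧ -(n : ℤ) ≤ v.2 ∧ v.2 ≤ (n : ℤ) := by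
  unfold Esq
  rw [Finset.mem_Icc, Prod.le_def, Prod.le_def]
  dsimp
  tauto

lemma Esq_mono {a b : ℕ} (h : a ≤ b) : Esq a ⊆ Esq b := by
  intro v hv
  simp only [mem_Esq] at hv ⊢
  omega

lemma card_Esq (n : ℕ) : (Esq n).card = (2 * n + 1) * (2 * n + 1) := by
  unfold Esq
  rw [Finset.card_Icc_prod]
  simp only [Int.card_Icc]
  have : ((n : ℤ) + 1 - -(n : ℤ)).toNat = 2 * n + 1 := by omega
  rw [this]

lemma card_Eband_le {r n : ℕ} (hrn : r ≤ n) (hn : 1 ≤ n) :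
    (Eband r n).card ≤ 12 * r * n := by
  unfold Eband
  rw [Finset.card_sdiff_of_subset (Esq_mono (Nat.sub_le n r))]
  rw [card_Esq, card_Esq]
  obtain ⟨s, rfl⟩ : ∃ s, n = s + r := ⟨n - r, (Nat.sub_add_cancel hrn).symm⟩
  rw [Nat.add_sub_cancel]
  rcases Nat.eq_zero_or_pos r with rfl | hr
  · simp
  · apply Nat.sub_le_of_le_add
    nlinarith

end Basic
section CoverNum
variable {X ι κ : Type*}

lemma log_nat_nonneg (n : ℕ) : 0 ≤ Real.log n := by
  rcases Nat.eq_zero_or_pos n with rfl | h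
  · simp
  · exact Real.log_nonneg (by exact_mod_cast h)

lemma log_nat_le_log_nat {a b : ℕ} (h : a ≤ b) : Real.log a ≤ Real.log b := by
  rcases Nat.eq_zero_or_pos a with rfl | ha
  · simpa using log_nat_nonneg b
  · exact Real.log_le_log (by exact_mod_cast ha) (by exact_mod_cast h)

lemma div_nat_mono {a b : ℝ} (h : a ≤ b) (N : ℕ) : a / N ≤ b / N := by
  rcases Nat.eq_zero_or_pos N with rfl | hN
  · simp
  · have hN' : (0 : ℝ) < N := by exact_mod_cast hN
    exact (div_le_div_iff_of_pos_right hN').2 h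

lemma log_le_of_le_mul {a b K : ℕ} (hK : 1 ≤ K) (h : a ≤ K * b) :
    Real.log a ≤ Real.log K + Real.log b := by
  rcases Nat.eq_zero_or_pos a with rfl | ha
  · simpa using add_nonneg (log_nat_nonneg K) (log_nat_nonneg b)
  · have hb : 1 ≤ b := by
      rcases Nat.eq_zero_or_pos b with rfl | hb
      · omega
      · exact hb
    have h2 := log_nat_le_log_nat h
    rwa [Nat.cast_mul, Real.log_mul (by positivity) (by positivity)] at h2

lemma coverNum_le [Fintype ι] {C : ι → Set X} (s : Finset ι)
    (hs : (⋃ i ∈ s, C i) = Set.univ) : coverNum C ≤ s.card :=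
  Nat.sInf_le ⟨s, rfl, hs⟩

lemma coverNum_covers [Fintype ι] {C : ι → Set X}
    (h : ∀ x, ∃ i, x ∈ C i) :
    ∃ s : Finset ι, s.card = coverNum C ∧ (⋃ i ∈ s, C i) = Set.univ := by
  classical
  have hne : {m : ℕ | ∃ s : Finset ι, s.card = m ∧ (⋃ i ∈ s, C i) = Set.univ}.Nonempty := by
    refine ⟨(Finset.univ : Finset ι).card, Finset.univ, rfl, ?_⟩
    ext x
    simpa using h x
  exact Nat.sInf_mem hne

lemma coverNum_le_card [Fintype ι] {C : ι → Set X}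
    (h : ∀ x, ∃ i, x ∈ C i) : coverNum C ≤ Fintype.card ι := by
  classical
  have := coverNum_le (C := C) Finset.univ (by ext x; simpa using h x)
  simpa using this

lemma coverNum_mono_refine [Fintype ι] [Fintype κ] {C : ι → Set X} {D : κ → Set X}
    (hD : ∀ x, ∃ j, x ∈ D j) (href : ∀ j, ∃ i, D j ⊆ C i) :
    coverNum C ≤ coverNum D := by
  classical
  obtain ⟨s, hcard, huniv⟩ := coverNum_covers hD
  choose φ hφ using href
  refine le_trans (coverNum_le (s.image φ) ?_) (hcard ▸ Finset.card_image_le)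
  apply Set.eq_univ_of_univ_subset
  intro x _
  have hx : x ∈ ⋃ j ∈ s, D j := huniv ▸ Set.mem_univ x
  simp only [Set.mem_iUnion] at hx ⊢
  obtain ⟨j, hj, hxj⟩ := hx
  exact ⟨φ j, Finset.mem_image_of_mem φ hj, hφ j hxj⟩

lemma coverNum_fiber_le_ncard [Fintype ι] (q : X → ι) :
    coverNum (fun i => q ⁻¹' {i}) ≤ (Set.range q).ncard := by
  classical
  have hfin : (Set.range q).Finite := Set.toFinite _
  refine le_trans (coverNum_le hfin.toFinset ?_) ?_
  · ext x
    simp only [Set.mem_iUnion, Set.Finite.mem_toFinset, Set.mem_preimage,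
      Set.mem_singleton_iff, Set.mem_univ, iff_true]
    exact ⟨q x, Set.mem_range_self x, rfl⟩
  · rw [Set.ncard_eq_toFinset_card _ hfin]

lemma ncard_range_le_coverNum [Fintype ι] (q : X → ι) :
    (Set.range q).ncard ≤ coverNum (fun i => q ⁻¹' {i}) := by
  classical
  obtain ⟨s, hcard, huniv⟩ :=
    coverNum_covers (C := fun i => q ⁻¹' {i}) (fun x => ⟨q x, rfl⟩)
  have hsub : Set.range q ⊆ (s : Set ι) := by
    rintro i ⟨x, rfl⟩
    have hx : x ∈ ⋃ j ∈ s, q ⁻¹' {j} := huniv ▸ Set.mem_univ x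
    simp only [Set.mem_iUnion, Set.mem_preimage, Set.mem_singleton_iff] at hx
    obtain ⟨j, hj, hq⟩ := hx
    rw [hq]; exact hj
  calc (Set.range q).ncard ≤ (s : Set ι).ncard :=
        Set.ncard_le_ncard hsub s.finite_toSet
    _ = s.card := Set.ncard_coe_finset s
    _ = _ := hcard

lemma ncard_range_le_of_det {β γ : Type*} [Finite γ] (f : X → β) (q : X → γ)
    (h : ∀ x y, q x = q y → f x = f y) :
    (Set.range f).ncard ≤ (Set.range q).ncard := by
  rw [← Nat.card_coe_set_eq, ← Nat.card_coe_set_eq]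
  refine Nat.card_le_card_of_surjective
    (fun b : Set.range q => (⟨f b.2.choose, Set.mem_range_self _⟩ : Set.range f)) ?_
  rintro ⟨y, x, rfl⟩
  refine ⟨⟨q x, Set.mem_range_self x⟩, ?_⟩
  exact Subtype.ext (h _ _ (⟨q x, Set.mem_range_self x⟩ : Set.range q).2.choose_spec)

lemma ncard_range_pair_le {β γ : Type*} [Fintype β] [Finite γ] (f : X → β) (q : X → γ) :
    (Set.range (fun x => (f x, q x))).ncard ≤ Fintype.card β * (Set.range q).ncard := by
  rw [← Nat.card_coe_set_eq, ← Nat.card_coe_set_eq]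
  have hinj : Function.Injective
      (fun b : Set.range (fun x => (f x, q x)) =>
        ((b.1.1, ⟨b.1.2, by
          obtain ⟨x, hx⟩ := b.2
          exact ⟨x, congrArg Prod.snd hx⟩⟩) : β × Set.range q)) := by
    rintro ⟨⟨b1, b2⟩, hb⟩ ⟨⟨c1, c2⟩, hc⟩ h
    simp only [Prod.mk.injEq, Subtype.mk.injEq] at h ⊢
    exact ⟨h.1, h.2⟩
  have hle := Nat.card_le_card_of_injective _ hinj
  rwa [Nat.card_prod, Nat.card_eq_fintype_card (α := β)] at hle

end CoverNum
section Limsup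

open Filter

lemma my_limsup_le_limsup {u v : ℕ → ℝ} (h0 : ∀ᶠ n in atTop, 0 ≤ u n)
    (hb : ∃ B, ∀ᶠ n in atTop, v n ≤ B)
    (hle : ∀ ε : ℝ, 0 < ε → ∀ᶠ n in atTop, u n ≤ v n + ε) :
    limsup u atTop ≤ limsup v atTop := by
  obtain ⟨B, hB⟩ := hb
  have hvb : IsBoundedUnder (· ≤ ·) atTop v := ⟨B, by simpa using hB⟩
  have hcu : IsCoboundedUnder (· ≤ ·) atTop u :=
    Filter.isCoboundedUnder_le_of_eventually_le atTop h0
  refine le_of_forall_pos_le_add fun ε hε => ?_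
  have h1 : ∀ᶠ n in atTop, v n < limsup v atTop + ε / 2 :=
    Filter.eventually_lt_of_limsup_lt (by linarith) hvb
  have h2 := hle (ε / 2) (by linarith)
  refine Filter.limsup_le_of_le hcu ?_
  filter_upwards [h1, h2] with n hn1 hn2
  linarith

lemma my_limsup_mono {u v : ℕ → ℝ} (h0 : ∀ᶠ n in atTop, 0 ≤ u n)
    (hb : ∃ B, ∀ᶠ n in atTop, v n ≤ B) (hle : ∀ᶠ n in atTop, u n ≤ v n) :
    limsup u atTop ≤ limsup v atTop :=
  my_limsup_le_limsup h0 hb fun ε hε => hle.mono fun n h => by linarith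

lemma limsup_shift_div_le {a : ℕ → ℝ} (h0 : ∀ n, 0 ≤ a n)
    (hB : ∃ B, ∀ᶠ n in atTop, a n / n ≤ B) (k : ℕ) :
    limsup (fun n : ℕ => a (n + k) / n) atTop ≤ limsup (fun n : ℕ => a n / n) atTop := by
  obtain ⟨B, hB⟩ := hB
  set L := limsup (fun n : ℕ => a n / n) atTop with hL
  have hbv : IsBoundedUnder (· ≤ ·) atTop (fun n : ℕ => a n / n) := ⟨B, by simpa using hB⟩
  have hL0 : 0 ≤ L :=
    Filter.le_limsup_of_frequently_le
      (Filter.Frequently.of_forall fun n => div_nonneg (h0 n) (Nat.cast_nonneg n)) hbv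
  refine le_of_forall_pos_le_add fun ε hε => ?_
  have h1 : ∀ᶠ n in atTop, a n / n < L + ε / 2 :=
    Filter.eventually_lt_of_limsup_lt (by linarith) hbv
  obtain ⟨M, hM⟩ := Filter.eventually_atTop.1 h1
  have htend : Filter.Tendsto (fun n : ℕ => ((L + ε / 2) * k) / n) atTop (nhds 0) :=
    tendsto_const_div_atTop_nhds_zero_nat _
  have h2 : ∀ᶠ n : ℕ in atTop, ((L + ε / 2) * k) / n < ε / 2 :=
    htend.eventually_lt_const (by linarith)
  have hcu : IsCoboundedUnder (· ≤ ·) atTop (fun n : ℕ => a (n + k) / n) :=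
    Filter.isCoboundedUnder_le_of_eventually_le atTop
      (Filter.Eventually.of_forall fun n => div_nonneg (h0 _) (Nat.cast_nonneg n))
  refine Filter.limsup_le_of_le hcu ?_
  have hev : ∀ᶠ n : ℕ in atTop, M ≤ n ∧ 1 ≤ n ∧ ((L + ε / 2) * k) / n < ε / 2 := by
    filter_upwards [Filter.eventually_ge_atTop M, Filter.eventually_ge_atTop 1, h2] with n ha hb hc
    exact ⟨ha, hb, hc⟩
  filter_upwards [hev] with n ⟨hnM, hn1, hn2⟩
  have hn0 : (0 : ℝ) < n := by exact_mod_cast hn1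
  have hnk0 : (0 : ℝ) < ((n + k : ℕ) : ℝ) := by positivity
  have hMnk := hM (n + k) (le_trans hnM (Nat.le_add_right n k))
  have hc0 : 0 ≤ a (n + k) / ((n + k : ℕ) : ℝ) := div_nonneg (h0 _) (by positivity)
  have e1 : a (n + k) / (n : ℝ)
      = (a (n + k) / ((n + k : ℕ) : ℝ)) * (((n + k : ℕ) : ℝ) / n) := by
    field_simp
  have e2 : (a (n + k) / ((n + k : ℕ) : ℝ)) * (((n + k : ℕ) : ℝ) / n)
      ≤ (L + ε / 2) * (((n + k : ℕ) : ℝ) / n) := by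
    apply mul_le_mul_of_nonneg_right hMnk.le
    positivity
  have e3 : (L + ε / 2) * (((n + k : ℕ) : ℝ) / n) = (L + ε / 2) + ((L + ε / 2) * k) / n := by
    push_cast
    field_simp
  rw [e1]
  calc (a (n + k) / ((n + k : ℕ) : ℝ)) * (((n + k : ℕ) : ℝ) / n)
      ≤ (L + ε / 2) + ((L + ε / 2) * k) / n := by rw [← e3]; exact e2
    _ ≤ L + ε := by linarith

end Limsup
section CovEnt

open Filter

variable {X ι κ : Type*}

lemma joinN_covers (F : X → X) {C : ι → Set X} (h : ∀ x, ∃ i, x ∈ C i) (N : ℕ) :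
    ∀ x, ∃ g : Fin N → ι, x ∈ ⋂ i : Fin N, (F^[(i : ℕ)]) ⁻¹' C (g i) := by
  intro x
  choose g hg using fun t : Fin N => h (F^[(t : ℕ)] x)
  exact ⟨g, Set.mem_iInter.2 fun t => hg t⟩

lemma term_le_log_card [Fintype ι] (F : X → X) (C : ι → Set X)
    (hcov : ∀ x, ∃ i, x ∈ C i) {N : ℕ} (hN : 1 ≤ N) :
    Real.log ((coverNum fun g : Fin N → ι => ⋂ i : Fin N, (F^[(i : ℕ)]) ⁻¹' C (g i) : ℕ) : ℝ) /
      (N : ℝ) ≤ Real.log (Fintype.card ι) := by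
  classical
  have hc : (coverNum fun g : Fin N → ι => ⋂ i : Fin N, (F^[(i : ℕ)]) ⁻¹' C (g i))
      ≤ Fintype.card (Fin N → ι) := coverNum_le_card (joinN_covers F hcov N)
  have h2 := log_nat_le_log_nat hc
  rw [Fintype.card_fun, Fintype.card_fin] at h2
  have h3 : Real.log ((Fintype.card ι ^ N : ℕ) : ℝ) = N * Real.log (Fintype.card ι) := by
    rw [Nat.cast_pow, Real.log_pow]
  rw [h3] at h2
  have hN' : (0 : ℝ) < N := by exact_mod_cast hN
  rw [div_le_iff₀ hN']
  linarith [h2]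

lemma covEnt_nonneg [Fintype ι] (F : X → X) (C : ι → Set X)
    (hcov : ∀ x, ∃ i, x ∈ C i) : 0 ≤ covEnt F C := by
  apply Filter.le_limsup_of_frequently_le
  · exact Filter.Frequently.of_forall fun N =>
      div_nonneg (log_nat_nonneg _) (Nat.cast_nonneg _)
  · refine ⟨Real.log (Fintype.card ι) ⊔ 0, ?_⟩
    rw [Filter.eventually_map]
    filter_upwards [Filter.eventually_ge_atTop 1] with N hN
    exact le_sup_of_le_left (term_le_log_card F C hcov hN)

lemma covEnt_le_log_card [Fintype ι] [Nonempty ι] (F : X → X) (C : ι → Set X)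
    (hcov : ∀ x, ∃ i, x ∈ C i) : covEnt F C ≤ Real.log (Fintype.card ι) := by
  have hlog : 0 ≤ Real.log (Fintype.card ι) := log_nat_nonneg _
  apply Filter.limsup_le_of_le
  · exact Filter.isCoboundedUnder_le_of_eventually_le atTop
      (Filter.Eventually.of_forall fun N =>
        div_nonneg (log_nat_nonneg _) (Nat.cast_nonneg _))
  · refine Filter.Eventually.of_forall fun N => ?_
    rcases Nat.eq_zero_or_pos N with rfl | hN
    · simpa using hlog
    · exact term_le_log_card F C hcov hN

lemma covEnt_mono [Fintype ι] [Fintype κ] [Nonempty κ] (F : X → X)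
    (C : ι → Set X) (D : κ → Set X)
    (hD : ∀ x, ∃ j, x ∈ D j) (href : ∀ j, ∃ i, D j ⊆ C i) :
    covEnt F C ≤ covEnt F D := by
  apply my_limsup_mono
  · exact Filter.Eventually.of_forall fun N =>
      div_nonneg (log_nat_nonneg _) (Nat.cast_nonneg _)
  · refine ⟨Real.log (Fintype.card κ), Filter.Eventually.of_forall fun N => ?_⟩
    rcases Nat.eq_zero_or_pos N with rfl | hN
    · simpa using (log_nat_nonneg (Fintype.card κ))
    · exact term_le_log_card F D hD hN
  · refine Filter.Eventually.of_forall fun N => ?_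
    apply div_nat_mono
    apply log_nat_le_log_nat
    apply coverNum_mono_refine (joinN_covers F hD N)
    intro g
    choose φ hφ using href
    exact ⟨fun t => φ (g t), Set.iInter_mono fun t => Set.preimage_mono (hφ (g t))⟩

lemma join_fiber_eq (F : X → X) (q : X → ι) (N : ℕ) :
    (fun g : Fin N → ι => ⋂ t : Fin N, (F^[(t : ℕ)]) ⁻¹' (q ⁻¹' {g t}))
      = fun g => (fun x (t : Fin N) => q (F^[(t : ℕ)] x)) ⁻¹' {g} := by
  funext g
  ext x
  simp [Set.mem_iInter, funext_iff]

end CovEnt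
section CA

open Filter

variable {A : Type*}

lemma ca_local {F : Config A → Config A} {r : ℕ} (hF : IsCA F r) (x y : Config A) (u : ℤ × ℤ)
    (h : ∀ w ∈ Esq r, x (w + u) = y (w + u)) : F x u = F y u := by
  have e1 : F x u = F (shift u x) (0, 0) := by
    rw [hF.1 u x]
    show F x u = F x ((0, 0) + u)
    rw [zero_pair_add]
  have e2 : F y u = F (shift u y) (0, 0) := by
    rw [hF.1 u y]
    show F y u = F y ((0, 0) + u)
    rw [zero_pair_add]
  rw [e1, e2]
  exact hF.2 _ _ fun w hw => h w hw

lemma det_iter {F : Config A → Config A} {r : ℕ} (hF : IsCA F r) {m : ℕ} (hm : r ≤ m)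
    {x y : Config A} {N : ℕ}
    (h0 : ∀ v ∈ Esq m, x v = y v)
    (hb : ∀ t < N, ∀ v ∈ Eband r m, F^[t] x v = F^[t] y v) :
    ∀ t < N, ∀ v ∈ Esq m, F^[t] x v = F^[t] y v := by
  intro t
  induction t with
  | zero => intro _ v hv; simpa using h0 v hv
  | succ t ih =>
    intro ht v hv
    by_cases hv' : v ∈ Esq (m - r)
    · rw [Function.iterate_succ_apply', Function.iterate_succ_apply']
      apply ca_local hF _ _ v
      intro w hw
      apply ih (Nat.lt_of_succ_lt ht)
      have hw' := mem_Esq.1 hw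
      have hv'' := mem_Esq.1 hv'
      have hcast : ((m - r : ℕ) : ℤ) = (m : ℤ) - (r : ℤ) := by omega
      rw [hcast] at hv''
      rw [mem_Esq]
      simp only [Prod.fst_add, Prod.snd_add]
      omega
    · exact hb (t + 1) ht v (Finset.mem_sdiff.2 ⟨hv, hv'⟩)

lemma covSq_S0_eq (m : ℕ) :
    covSq (S0cov (A := A)) m = fun g => sqJoin p0 m ⁻¹' {g} := by
  funext g
  ext x
  simp [covSq, S0cov, sqJoin, p0, shift, funext_iff, Set.mem_iInter]

lemma covBand_S0_eq (r n : ℕ) :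
    covBand (S0cov (A := A)) r n = fun g => bandJoin p0 r n ⁻¹' {g} := by
  funext g
  ext x
  simp [covBand, S0cov, bandJoin, p0, shift, funext_iff, Set.mem_iInter]

lemma mem_covSq {m : ℕ} {g : {v : ℤ × ℤ // v ∈ Esq m} → A} {x : Config A} :
    x ∈ covSq (S0cov (A := A)) m g ↔ ∀ u (hu : u ∈ Esq m), x u = g ⟨u, hu⟩ := by
  simp [covSq, S0cov, shift, Set.mem_iInter, Subtype.forall]

lemma covBand_covers {ι : Type*} {D : ι → Set (Config A)} (hD : ∀ x, ∃ i, x ∈ D i)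
    (r n : ℕ) : ∀ x, ∃ g, x ∈ covBand D r n g := by
  intro x
  choose g hg using fun v : {v : ℤ × ℤ // v ∈ Eband r n} => hD (shift v.1 x)
  exact ⟨g, Set.mem_iInter.2 hg⟩

lemma covBand_refines {ι κ : Type*} {C : ι → Set (Config A)} {D : κ → Set (Config A)}
    (href : ∀ j, ∃ i, D j ⊆ C i) (r n : ℕ) :
    ∀ g, ∃ h, covBand D r n g ⊆ covBand C r n h := by
  intro g
  choose φ hφ using href
  exact ⟨fun v => φ (g v), Set.iInter_mono fun v => Set.preimage_mono (hφ (g v))⟩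

lemma coverNum_sq_le_band [Fintype A] (F : Config A → Config A) {r : ℕ} (hF : IsCA F r)
    {m : ℕ} (hm : r ≤ m) (N : ℕ) :
    (coverNum fun g : Fin N → ({v : ℤ × ℤ // v ∈ Esq m} → A) =>
        ⋂ i : Fin N, (F^[(i : ℕ)]) ⁻¹' covSq (S0cov (A := A)) m (g i))
      ≤ Fintype.card ({v : ℤ × ℤ // v ∈ Esq m} → A) *
        (coverNum fun g : Fin N → ({v : ℤ × ℤ // v ∈ Eband r m} → A) =>
          ⋂ i : Fin N, (F^[(i : ℕ)]) ⁻¹' covBand (S0cov (A := A)) r m (g i)) := by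
  classical
  simp only [covSq_S0_eq, covBand_S0_eq]
  rw [join_fiber_eq F (sqJoin p0 m) N, join_fiber_eq F (bandJoin p0 r m) N]
  set Φ : Config A → (Fin N → ({v : ℤ × ℤ // v ∈ Esq m} → A)) :=
    fun x t => sqJoin p0 m (F^[(t : ℕ)] x) with hΦ
  set Ψ : Config A → (Fin N → ({v : ℤ × ℤ // v ∈ Eband r m} → A)) :=
    fun x t => bandJoin p0 r m (F^[(t : ℕ)] x) with hΨ
  set res : Config A → ({v : ℤ × ℤ // v ∈ Esq m} → A) := fun x v => x v.1 with hres
  have hdet : ∀ x y : Config A,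
      (fun x => (res x, Ψ x)) x = (fun x => (res x, Ψ x)) y → Φ x = Φ y := by
    intro x y h
    have h1 : res x = res y := congrArg Prod.fst h
    have h2 : Ψ x = Ψ y := congrArg Prod.snd h
    have h0 : ∀ v ∈ Esq m, x v = y v := fun v hv => congrFun h1 ⟨v, hv⟩
    have hbd : ∀ t < N, ∀ v ∈ Eband r m, F^[t] x v = F^[t] y v := by
      intro t ht v hv
      have := congrFun (congrFun h2 ⟨t, ht⟩) ⟨v, hv⟩
      simpa [hΨ, bandJoin, p0, shift] using this
    have hconc := det_iter hF hm h0 hbd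
    funext t v
    have := hconc (t : ℕ) t.2 v.1 v.2
    simpa [hΦ, sqJoin, p0, shift] using this
  calc (coverNum fun g : Fin N → ({v : ℤ × ℤ // v ∈ Esq m} → A) => Φ ⁻¹' {g})
      ≤ (Set.range Φ).ncard := coverNum_fiber_le_ncard Φ
    _ ≤ (Set.range (fun x => (res x, Ψ x))).ncard := ncard_range_le_of_det Φ _ hdet
    _ ≤ Fintype.card ({v : ℤ × ℤ // v ∈ Esq m} → A) * (Set.range Ψ).ncard :=
        ncard_range_pair_le res Ψ
    _ ≤ Fintype.card ({v : ℤ × ℤ // v ∈ Esq m} → A) *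
        (coverNum fun g : Fin N → ({v : ℤ × ℤ // v ∈ Eband r m} → A) => Ψ ⁻¹' {g}) :=
        Nat.mul_le_mul_left _ (ncard_range_le_coverNum Ψ)

end CA
section CA2

open Filter

variable {A : Type*}

set_option maxHeartbeats 1000000 in
lemma covEnt_sq_le_band [Fintype A] [Nonempty A] (F : Config A → Config A) {r : ℕ}
    (hF : IsCA F r) {m : ℕ} (hm : r ≤ m) :
    covEnt F (covSq (S0cov (A := A)) m) ≤ covEnt F (covBand (S0cov (A := A)) r m) := by
  classical
  have hS0 : ∀ x : Config A, ∃ a, x ∈ S0cov a := fun x => ⟨x (0, 0), rfl⟩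
  have hbandcov := covBand_covers hS0 r m
  set K := Fintype.card ({v : ℤ × ℤ // v ∈ Esq m} → A) with hK
  have hK1 : 1 ≤ K := Fintype.card_pos
  unfold covEnt
  apply my_limsup_le_limsup
  · exact Filter.Eventually.of_forall fun N =>
      div_nonneg (log_nat_nonneg _) (Nat.cast_nonneg _)
  · refine ⟨Real.log (Fintype.card ({v : ℤ × ℤ // v ∈ Eband r m} → A)),
      Filter.Eventually.of_forall fun N => ?_⟩
    rcases Nat.eq_zero_or_pos N with rfl | hN
    · simpa using log_nat_nonneg (Fintype.card ({v : ℤ × ℤ // v ∈ Eband r m} → A))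
    · exact term_le_log_card F _ hbandcov hN
  · intro ε hε
    have htend : Filter.Tendsto (fun N : ℕ => Real.log K / N) atTop (nhds 0) :=
      tendsto_const_div_atTop_nhds_zero_nat _
    have h1 : ∀ᶠ N : ℕ in atTop, Real.log K / N < ε := htend.eventually_lt_const hε
    filter_upwards [h1] with N hN
    have hml := log_le_of_le_mul hK1 (coverNum_sq_le_band F hF hm N)
    calc Real.log ((coverNum fun g : Fin N → ({v : ℤ × ℤ // v ∈ Esq m} → A) =>
            ⋂ i : Fin N, (F^[(i : ℕ)]) ⁻¹' covSq (S0cov (A := A)) m (g i) : ℕ) : ℝ) / N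
        ≤ (Real.log K + Real.log ((coverNum fun g : Fin N → ({v : ℤ × ℤ // v ∈ Eband r m} → A) =>
            ⋂ i : Fin N, (F^[(i : ℕ)]) ⁻¹' covBand (S0cov (A := A)) r m (g i) : ℕ) : ℝ)) / N :=
          div_nat_mono hml N
      _ = Real.log K / N + Real.log ((coverNum fun g : Fin N → ({v : ℤ × ℤ // v ∈ Eband r m} → A) =>
            ⋂ i : Fin N, (F^[(i : ℕ)]) ⁻¹' covBand (S0cov (A := A)) r m (g i) : ℕ) : ℝ) / N :=
          add_div _ _ _
      _ ≤ Real.log ((coverNum fun g : Fin N → ({v : ℤ × ℤ // v ∈ Eband r m} → A) =>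
            ⋂ i : Fin N, (F^[(i : ℕ)]) ⁻¹' covBand (S0cov (A := A)) r m (g i) : ℕ) : ℝ) / N + ε := by
          linarith

lemma covEnt_covBand_linear {ι : Type*} [Fintype A] [Fintype ι] [Nonempty ι]
    (F : Config A → Config A) (D : ι → Set (Config A)) (hD : ∀ x, ∃ i, x ∈ D i)
    {r n : ℕ} (hrn : r ≤ n) (hn : 1 ≤ n) :
    covEnt F (covBand D r n) ≤ (12 * r * n : ℕ) * Real.log (Fintype.card ι) := by
  classical
  have h1 : covEnt F (covBand D r n)
      ≤ Real.log (Fintype.card ({v : ℤ × ℤ // v ∈ Eband r n} → ι)) :=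
    covEnt_le_log_card F _ (covBand_covers hD r n)
  rw [Fintype.card_fun, Fintype.card_coe, Nat.cast_pow, Real.log_pow] at h1
  refine h1.trans ?_
  have hcard : ((Eband r n).card : ℝ) ≤ ((12 * r * n : ℕ) : ℝ) := by
    exact_mod_cast card_Eband_le hrn hn
  exact mul_le_mul_of_nonneg_right hcard (log_nat_nonneg _)

lemma ERcov_le_of_refines {ιC ιD : Type*} [Fintype A] [Nonempty A] [Fintype ιC] [Fintype ιD]
    [Nonempty ιC] [Nonempty ιD] (F : Config A → Config A) (r : ℕ)
    (C : ιC → Set (Config A)) (D : ιD → Set (Config A))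
    (hD : ∀ x, ∃ j, x ∈ D j) (href : ∀ j, ∃ i, D j ⊆ C i) :
    ERcov F C r ≤ ERcov F D r := by
  classical
  have hC : ∀ x, ∃ i, x ∈ C i := by
    intro x
    obtain ⟨j, hj⟩ := hD x
    obtain ⟨i, hi⟩ := href j
    exact ⟨i, hi hj⟩
  unfold ERcov
  apply my_limsup_mono
  · exact Filter.Eventually.of_forall fun n =>
      div_nonneg (covEnt_nonneg _ _ (covBand_covers hC r n)) (Nat.cast_nonneg _)
  · refine ⟨12 * r * Real.log (Fintype.card ιD), ?_⟩
    filter_upwards [Filter.eventually_ge_atTop (max r 1)] with n hn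
    have hrn : r ≤ n := le_trans (le_max_left r 1) hn
    have hn1 : 1 ≤ n := le_trans (le_max_right r 1) hn
    have h2 := covEnt_covBand_linear F D hD hrn hn1
    have hn0 : (0 : ℝ) < n := by exact_mod_cast hn1
    rw [div_le_iff₀ hn0]
    refine h2.trans ?_
    push_cast
    nlinarith [log_nat_nonneg (Fintype.card ιD)]
  · refine Filter.Eventually.of_forall fun n => ?_
    exact div_nat_mono
      (covEnt_mono F _ _ (covBand_covers hD r n) (covBand_refines href r n)) n

end CA2
section Leb

open Filter

variable {A : Type*}

lemma lebesgue [Fintype A] [TopologicalSpace A] [DiscreteTopology A] {m : ℕ}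
    (C : Fin (m + 1) → Set (Config A)) (hop : ∀ i, IsOpen (C i))
    (hcov : ∀ x, ∃ i, x ∈ C i) :
    ∃ (n₁ : ℕ) (I : Config A → Fin (m + 1)), ∀ y z : Config A,
      (∀ w ∈ Esq n₁, z w = y w) → z ∈ C (I y) := by
  classical
  have key : ∀ x : Config A, ∃ (n : ℕ) (i : Fin (m + 1)),
      ∀ z, (∀ w ∈ Esq n, z w = x w) → z ∈ C i := by
    intro x
    obtain ⟨i, hi⟩ := hcov x
    obtain ⟨I', u, hu, hsub⟩ := (isOpen_pi_iff.1 (hop i)) x hi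
    obtain ⟨n, hn⟩ : ∃ n : ℕ, ∀ w ∈ I', w ∈ Esq n := by
      refine ⟨I'.sup (fun w => w.1.natAbs ⊔ w.2.natAbs), fun w hw => ?_⟩
      have h1 : w.1.natAbs ⊔ w.2.natAbs ≤ I'.sup (fun w : ℤ × ℤ => w.1.natAbs ⊔ w.2.natAbs) := by
        exact Finset.le_sup (f := fun w : ℤ × ℤ => w.1.natAbs ⊔ w.2.natAbs) hw
      rw [mem_Esq]
      omega
    refine ⟨n, i, fun z hz => hsub ?_⟩
    intro w hw
    show z w ∈ u w
    have := hz w (hn w hw)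
    rw [this]
    exact (hu w hw).2
  choose nx ix hx using key
  have hopen : ∀ x, IsOpen {z : Config A | ∀ w ∈ Esq (nx x), z w = x w} := by
    intro x
    have he : {z : Config A | ∀ w ∈ Esq (nx x), z w = x w}
        = ⋂ w ∈ Esq (nx x), (fun z : Config A => z w) ⁻¹' {x w} := by
      ext z; simp
    rw [he]
    exact isOpen_biInter_finset fun w _ =>
      (continuous_apply w).isOpen_preimage _ (isOpen_discrete _)
  have hcover : (Set.univ : Set (Config A))
      ⊆ ⋃ x : Config A, {z | ∀ w ∈ Esq (nx x), z w = x w} :=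
    fun y _ => Set.mem_iUnion.2 ⟨y, fun w _ => rfl⟩
  obtain ⟨t, ht⟩ := IsCompact.elim_finite_subcover isCompact_univ _ hopen hcover
  have hy : ∀ y : Config A, ∃ x, x ∈ t ∧ ∀ w ∈ Esq (nx x), y w = x w := by
    intro y
    have := ht (Set.mem_univ y)
    simp only [Set.mem_iUnion, Set.mem_setOf_eq] at this
    obtain ⟨x, hx1, hx2⟩ := this
    exact ⟨x, hx1, hx2⟩
  choose xf hxf1 hxf2 using hy
  refine ⟨t.sup nx, fun y => ix (xf y), fun y z hz => ?_⟩
  apply hx (xf y)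
  intro w hw
  have hw1 : w ∈ Esq (t.sup nx) := Esq_mono (Finset.le_sup (hxf1 y)) hw
  rw [hz w hw1, hxf2 y w hw]

set_option maxHeartbeats 1000000 in
lemma ERcov_le_S0 [Fintype A] [Nonempty A] [TopologicalSpace A] [DiscreteTopology A]
    (F : Config A → Config A) {r : ℕ} (hF : IsCA F r) {m : ℕ}
    (C : Fin (m + 1) → Set (Config A)) (hop : ∀ i, IsOpen (C i))
    (hcovU : (⋃ i, C i) = Set.univ) :
    ERcov F C r ≤ ERcov F (S0cov (A := A)) r := by
  classical
  have hcov : ∀ x, ∃ i, x ∈ C i := by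
    intro x
    have hx : x ∈ ⋃ i, C i := hcovU.symm ▸ Set.mem_univ x
    simpa using hx
  have hS0 : ∀ x : Config A, ∃ a, x ∈ S0cov a := fun x => ⟨x (0, 0), rfl⟩
  obtain ⟨n₁, I, hI⟩ := lebesgue C hop hcov
  set n₀ := max n₁ r with hn₀
  have key : ∀ n : ℕ,
      covEnt F (covBand C r n) ≤ covEnt F (covBand (S0cov (A := A)) r (n + n₀)) := by
    intro n
    have step1 : covEnt F (covBand C r n) ≤ covEnt F (covSq (S0cov (A := A)) (n + n₀)) := by
      apply covEnt_mono
      · intro x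
        refine ⟨sqJoin p0 (n + n₀) x, ?_⟩
        rw [covSq_S0_eq]
        show x ∈ sqJoin p0 (n + n₀) ⁻¹' {sqJoin p0 (n + n₀) x}
        exact Set.mem_preimage.2 (Set.mem_singleton _)
      · intro g
        by_cases hne : (covSq (S0cov (A := A)) (n + n₀) g).Nonempty
        · obtain ⟨x₀, hx₀⟩ := hne
          refine ⟨fun v => I (shift v.1 x₀), ?_⟩
          intro x hx
          refine Set.mem_iInter.2 fun v => ?_
          refine hI (shift v.1 x₀) (shift v.1 x) ?_
          intro w hw
          have hmemv : v.1 ∈ Esq n := (Finset.mem_sdiff.1 v.2).1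
          have hw' : w + v.1 ∈ Esq (n + n₀) := by
            have h1 := mem_Esq.1 (Esq_mono (le_max_left n₁ r) hw)
            have h2 := mem_Esq.1 hmemv
            rw [mem_Esq]
            simp only [Prod.fst_add, Prod.snd_add]
            push_cast
            omega
          show x (w + v.1) = x₀ (w + v.1)
          rw [mem_covSq.1 hx (w + v.1) hw', mem_covSq.1 hx₀ (w + v.1) hw']
        · rw [Set.not_nonempty_iff_eq_empty] at hne
          exact ⟨Classical.arbitrary _, by rw [hne]; exact Set.empty_subset _⟩
    have step2 : covEnt F (covSq (S0cov (A := A)) (n + n₀))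
        ≤ covEnt F (covBand (S0cov (A := A)) r (n + n₀)) :=
      covEnt_sq_le_band F hF (le_trans (le_max_right n₁ r) (Nat.le_add_left n₀ n))
    exact step1.trans step2
  unfold ERcov
  have L1 : limsup (fun n : ℕ => covEnt F (covBand C r n) / (n : ℝ)) atTop
      ≤ limsup (fun n : ℕ => covEnt F (covBand (S0cov (A := A)) r (n + n₀)) / (n : ℝ)) atTop := by
    apply my_limsup_mono
    · exact Filter.Eventually.of_forall fun n =>
        div_nonneg (covEnt_nonneg _ _ (covBand_covers hcov r n)) (Nat.cast_nonneg _)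
    · refine ⟨24 * r * Real.log (Fintype.card A), ?_⟩
      filter_upwards [Filter.eventually_ge_atTop (max n₀ 1)] with n hn
      have hn0 : 1 ≤ n := le_trans (le_max_right n₀ 1) hn
      have hnn0 : n₀ ≤ n := le_trans (le_max_left n₀ 1) hn
      have hrn : r ≤ n + n₀ := le_trans (le_max_right n₁ r) (Nat.le_add_left n₀ n)
      have h1 := covEnt_covBand_linear F (S0cov (A := A)) hS0 hrn (by omega : 1 ≤ n + n₀)
      have hpos : (0 : ℝ) < n := by exact_mod_cast hn0
      rw [div_le_iff₀ hpos]
      refine h1.trans ?_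
      push_cast
      have hL := log_nat_nonneg (Fintype.card A)
      have hcast : (n₀ : ℝ) ≤ (n : ℝ) := by exact_mod_cast hnn0
      have hkey : 0 ≤ 12 * (r : ℝ) * Real.log (Fintype.card A) * ((n : ℝ) - (n₀ : ℝ)) :=
        mul_nonneg (mul_nonneg (mul_nonneg (by norm_num) (Nat.cast_nonneg r)) hL)
          (sub_nonneg.2 hcast)
      nlinarith [hkey]
    · exact Filter.Eventually.of_forall fun n => div_nat_mono (key n) n
  have L2 : limsup (fun n : ℕ => covEnt F (covBand (S0cov (A := A)) r (n + n₀)) / (n : ℝ)) atTop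
      ≤ limsup (fun n : ℕ => covEnt F (covBand (S0cov (A := A)) r n) / (n : ℝ)) atTop := by
    refine limsup_shift_div_le (a := fun k : ℕ => covEnt F (covBand (S0cov (A := A)) r k))
      (fun n => covEnt_nonneg _ _ (covBand_covers hS0 r n)) ?_ n₀
    · refine ⟨12 * r * Real.log (Fintype.card A), ?_⟩
      filter_upwards [Filter.eventually_ge_atTop (max r 1)] with n hn
      have hrn : r ≤ n := le_trans (le_max_left r 1) hn
      have hn1 : 1 ≤ n := le_trans (le_max_right r 1) hn
      have h1 := covEnt_covBand_linear F (S0cov (A := A)) hS0 hrn hn1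
      have hpos : (0 : ℝ) < n := by exact_mod_cast hn1
      rw [div_le_iff₀ hpos]
      refine h1.trans ?_
      push_cast
      nlinarith [log_nat_nonneg (Fintype.card A)]
  exact L1.trans L2

end Leb
section Empty

open Filter

lemma coverNum_of_isEmpty {X ι : Type*} [Fintype ι] [IsEmpty X] (C : ι → Set X) :
    coverNum C = 0 := by
  have h : (⋃ i ∈ (∅ : Finset ι), C i) = Set.univ := by
    simp [Set.eq_empty_of_isEmpty (Set.univ : Set X)]
  exact Nat.eq_zero_of_le_zero (by simpa using coverNum_le ∅ h)

lemma covEnt_of_isEmpty {X ι : Type*} [Fintype ι] [IsEmpty X] (F : X → X) (C : ι → Set X) :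
    covEnt F C = 0 := by
  unfold covEnt
  have h : (fun N : ℕ => Real.log ((coverNum fun g : Fin N → ι =>
      ⋂ i : Fin N, (F^[(i : ℕ)]) ⁻¹' C (g i) : ℕ) : ℝ) / (N : ℝ)) = fun _ : ℕ => (0 : ℝ) := by
    funext N
    rw [coverNum_of_isEmpty]
    simp
  rw [h]
  exact limsup_const 0

lemma ERcov_of_isEmpty {A ι : Type*} [Fintype ι] [IsEmpty (Config A)]
    (F : Config A → Config A) (C : ι → Set (Config A)) (r : ℕ) : ERcov F C r = 0 := by
  unfold ERcov
  have h : (fun n : ℕ => covEnt F (covBand C r n) / (n : ℝ)) = fun _ : ℕ => (0 : ℝ) := by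
    funext n
    rw [covEnt_of_isEmpty]
    simp
  rw [h]
  exact limsup_const 0

end Empty

/-- For any CA `F` on `A^{ℤ²}`, the topological entropy rate
satisfies `ER(A^{ℤ²},F) = ER(S_0,F)`, where `ER(A^{ℤ²},F)` is the supremum of
`ER(C,F)` over all finite open covers `C`. -/
theorem topEntropyRate_eq_S0 {A : Type*} [Fintype A]
    [TopologicalSpace A] [DiscreteTopology A]
    (F : Config A → Config A) (r : ℕ) (hF : IsCA F r) :
    ERtop F r = ERcov F (S0cov (A := A)) r := by
  classical
  rcases isEmpty_or_nonempty A with hA | hA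
  · have hCfg : IsEmpty (Config A) := ⟨fun f => (hA.false (f (0, 0)))⟩
    have hset : {x : ℝ | ∃ (m : ℕ) (C : Fin (m + 1) → Set (Config A)),
        (∀ i, IsOpen (C i)) ∧ (⋃ i, C i) = Set.univ ∧ x = ERcov F C r} = {(0 : ℝ)} := by
      ext x
      simp only [Set.mem_setOf_eq, Set.mem_singleton_iff]
      constructor
      · rintro ⟨m, C, -, -, rfl⟩
        exact ERcov_of_isEmpty F C r
      · rintro rfl
        refine ⟨0, fun _ => (∅ : Set (Config A)), fun _ => isOpen_empty, ?_,
          (ERcov_of_isEmpty F _ r).symm⟩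
        simp [Set.eq_empty_of_isEmpty (Set.univ : Set (Config A))]
    unfold ERtop
    rw [hset, csSup_singleton, ERcov_of_isEmpty]
  · unfold ERtop
    have hub : ∀ x ∈ {x : ℝ | ∃ (m : ℕ) (C : Fin (m + 1) → Set (Config A)),
        (∀ i, IsOpen (C i)) ∧ (⋃ i, C i) = Set.univ ∧ x = ERcov F C r},
        x ≤ ERcov F (S0cov (A := A)) r := by
      rintro x ⟨m, C, hop, hcov, rfl⟩
      exact ERcov_le_S0 F hF C hop hcov
    have hO : ∀ a : A, IsOpen (S0cov (A := A) a) := by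
      intro a
      have : S0cov (A := A) a = (fun x : Config A => x (0, 0)) ⁻¹' {a} := rfl
      rw [this]
      exact (continuous_apply ((0 : ℤ), (0 : ℤ))).isOpen_preimage _ (isOpen_discrete _)
    set e : Fin (Fintype.card A - 1 + 1) ≃ A :=
      (finCongr (Nat.succ_pred_eq_of_pos Fintype.card_pos)).trans
        (Fintype.equivFin A).symm with he
    have hScov : ∀ x : Config A, ∃ a, x ∈ S0cov a := fun x => ⟨x (0, 0), rfl⟩
    have heq : ERcov F (S0cov (A := A) ∘ e) r = ERcov F (S0cov (A := A)) r := by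
      apply le_antisymm
      · apply ERcov_le_of_refines F r _ _ hScov
        intro a
        exact ⟨e.symm a, by simp⟩
      · apply ERcov_le_of_refines F r _ _
        · intro x
          exact ⟨e.symm (x (0, 0)), by simp [S0cov]⟩
        · intro j
          exact ⟨e j, le_refl _⟩
    have hmem : ERcov F (S0cov (A := A)) r ∈ {x : ℝ | ∃ (m : ℕ)
        (C : Fin (m + 1) → Set (Config A)),
        (∀ i, IsOpen (C i)) ∧ (⋃ i, C i) = Set.univ ∧ x = ERcov F C r} := by
      refine ⟨Fintype.card A - 1, S0cov (A := A) ∘ e, fun i => hO _, ?_, heq.symm⟩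
      apply Set.eq_univ_of_univ_subset
      intro x _
      exact Set.mem_iUnion.2 ⟨e.symm (x (0, 0)), by simp [S0cov]⟩
    exact le_antisymm (csSup_le ⟨_, hmem⟩ hub) (le_csSup ⟨_, hub⟩ hmem)
end
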